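/- arXiv:1702.00781 — 7 statements merged into one kernel-verified Lean document; each statement's English description precedes it below -/
import Mathlib

section
/- Let g ∈ ℕ³ and let P_g = {c ∈ ℕ³ : c ≤ g componentwise}. Let U be a nonempty up set of P_g (i.e., if c ∈ U and c ≤ d ≤ g then d ∈ U) whose complement D = P_g \ U is also nonempty. Then sdepth_g(U) > sdepth_g(D). (This is the combinatorial form, via Herzog–Vladoiu–Zheng, of: for every monomial ideal I of S = K[x₁,x₂,x₃], sdepth I > sdepth S/I.) -/
open Finset

/-- An interval partition of a finite family `Q ⊆ ℕ³` (with the componentwise order):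
a finite collection of nonempty intervals `[a,b]`, each contained in `Q`, pairwise
disjoint, and covering `Q`. -/
structure IntervalPartitionN3 (Q : Finset (Fin 3 → ℕ)) where
  pairs : Finset ((Fin 3 → ℕ) × (Fin 3 → ℕ))
  le : ∀ p ∈ pairs, p.1 ≤ p.2
  sub : ∀ p ∈ pairs, Finset.Icc p.1 p.2 ⊆ Q
  disj : ∀ p ∈ pairs, ∀ q ∈ pairs, p ≠ q →
    Disjoint (Finset.Icc p.1 p.2) (Finset.Icc q.1 q.2)
  covers : ∀ c ∈ Q, ∃ p ∈ pairs, c ∈ Finset.Icc p.1 p.2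

/-- `α_g(b)`: the number of coordinates where `b` agrees with `g`. -/
def alphaG (g b : Fin 3 → ℕ) : ℕ := (Finset.univ.filter (fun i => b i = g i)).card

/-- The Stanley depth relative to `g`: the largest `k` such that some interval
partition of `Q` has `α_g(b) ≥ k` for the upper bound `b` of every interval. -/
noncomputable def sdepthG (g : Fin 3 → ℕ) (Q : Finset (Fin 3 → ℕ)) : ℕ :=
  sSup {k | ∃ P : IntervalPartitionN3 Q, ∀ p ∈ P.pairs, k ≤ alphaG g p.2}

/-!
Since `g ∈ U`, no interval of `D` ends at `g`, so `sdepth D ≤ 2`; it is enough to show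
`sdepth U > k` whenever `sdepth D ≥ k`, for `k = 0, 1, 2`. If `d` lies in an interval `[a, b]`
of a partition of `D` with `α(b) ≥ k`, then `[d, b] ⊆ D`: every `d ∈ D` can be raised to `g` in
`k` of its coordinates without leaving `D`.

* `k = 0`: the lines of `U` in direction `0` form a partition with `α ≥ 1`.
* `k = 2`: the componentwise minimum of `U` lies in `U`; otherwise the interval of `D` above it,
  which reaches `g` in two coordinates, would contain an element of `U` attaining the minimum in
  the third. So `U = [min U, g]`.
* `k = 1`: no point `(x, y, t) ∈ D` with `(x, y, g 2) ∈ U` has both `(g 0, y, t)` and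
  `(x, g 1, t)` in `U`. Split `U` into its vertical fibres over `(x, y)`, starting at height
  `e(x, y)`. A fibre with `e(x, y) = e(x, g 1)` joins the rectangle `{x} × [y₀, g 1] × [e, g 2]`;
  any other fibre, by the condition just stated, starts at the same height as the fibre over
  `(g 0, y)`, and joins the rectangle `[x₀, g 0] × {y} × [e, g 2]`. Both kinds have `α = 2`.
-/

section Alpha

variable {g b : Fin 3 → ℕ}

lemma alphaG_le_three : alphaG g b ≤ 3 :=
  (card_filter_le _ _).trans_eq (card_fin 3)

lemma alphaG_self : alphaG g g = 3 := by
  simp [alphaG]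

lemma eq_of_three_le_alphaG (h : 3 ≤ alphaG g b) : b = g := by
  have hall := card_filter_eq_iff.mp (alphaG_le_three.antisymm (by simpa using h))
  exact funext fun i => hall i (mem_univ i)

lemma exists_eq_of_one_le_alphaG (h : 1 ≤ alphaG g b) : ∃ i, b i = g i := by
  obtain ⟨i, hi⟩ := card_pos.mp h
  exact ⟨i, (mem_filter.mp hi).2⟩

lemma exists_forall_ne_eq_of_two_le_alphaG (h : 2 ≤ alphaG g b) :
    ∃ k, ∀ i ≠ k, b i = g i := by
  have hsplit := card_filter_add_card_filter_not (s := univ) fun i => b i = g i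
  rw [card_fin] at hsplit
  have hbad : #{i | ¬b i = g i} ≤ 1 := by
    rw [alphaG] at h
    omega
  obtain ⟨k, hk⟩ := card_le_one_iff_subset_singleton.mp hbad
  exact ⟨k, fun i hik => by_contra fun hi => hik (mem_singleton.mp (hk (by simp [hi])))⟩

lemma one_le_alphaG {i : Fin 3} (hi : b i = g i) : 1 ≤ alphaG g b :=
  card_pos.mpr ⟨i, by simp [hi]⟩

lemma two_le_alphaG {i j : Fin 3} (hij : i ≠ j) (hi : b i = g i) (hj : b j = g j) :
    2 ≤ alphaG g b :=
  calc 2 = #{i, j} := (card_pair hij).symm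
    _ ≤ alphaG g b := card_le_card fun k hk => by
      rcases mem_insert.mp hk with rfl | hk
      · simp [hi]
      · simp [mem_singleton.mp hk, hj]

end Alpha

section StanleyDepth

variable {g : Fin 3 → ℕ} {Q : Finset (Fin 3 → ℕ)}

def IsPieceMap (Q : Finset (Fin 3 → ℕ)) (f : (Fin 3 → ℕ) → (Fin 3 → ℕ) × (Fin 3 → ℕ)) :
    Prop :=
  ∀ c ∈ Q, c ∈ Icc (f c).1 (f c).2 ∧ Icc (f c).1 (f c).2 ⊆ Q ∧
    ∀ d ∈ Icc (f c).1 (f c).2, f d = f c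

def IntervalPartitionN3.ofPieceMap {f : (Fin 3 → ℕ) → (Fin 3 → ℕ) × (Fin 3 → ℕ)}
    (hf : IsPieceMap Q f) : IntervalPartitionN3 Q where
  pairs := Q.image f
  le := by
    simp only [mem_image]
    rintro _ ⟨c, hc, rfl⟩
    exact (mem_Icc.mp (hf c hc).1).1.trans (mem_Icc.mp (hf c hc).1).2
  sub := by
    simp only [mem_image]
    rintro _ ⟨c, hc, rfl⟩
    exact (hf c hc).2.1
  disj := by
    simp only [mem_image]
    rintro _ ⟨c, hc, rfl⟩ _ ⟨c', hc', rfl⟩ hne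
    refine disjoint_left.mpr fun d hd hd' => hne ?_
    rw [← (hf c hc).2.2 d hd, (hf c' hc').2.2 d hd']
  covers c hc := ⟨f c, mem_image_of_mem f hc, (hf c hc).1⟩

lemma bddAbove_sdepthG_set (hQ : Q.Nonempty) :
    BddAbove {k | ∃ P : IntervalPartitionN3 Q, ∀ p ∈ P.pairs, k ≤ alphaG g p.2} := by
  refine ⟨3, ?_⟩
  rintro k ⟨P, hP⟩
  obtain ⟨c, hc⟩ := hQ
  obtain ⟨p, hp, -⟩ := P.covers c hc
  exact (hP p hp).trans alphaG_le_three

lemma IsPieceMap.le_sdepthG {f : (Fin 3 → ℕ) → (Fin 3 → ℕ) × (Fin 3 → ℕ)} (hf : IsPieceMap Q f)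
    (hQ : Q.Nonempty) {k : ℕ} (hk : ∀ c ∈ Q, k ≤ alphaG g (f c).2) : k ≤ sdepthG g Q := by
  refine le_csSup (bddAbove_sdepthG_set hQ) ⟨.ofPieceMap hf, ?_⟩
  simp only [IntervalPartitionN3.ofPieceMap, mem_image]
  rintro _ ⟨c, hc, rfl⟩
  exact hk c hc

lemma exists_le_of_le_sdepthG {k : ℕ} (hk : k ≤ sdepthG g Q) {d : Fin 3 → ℕ} (hd : d ∈ Q) :
    ∃ b, d ≤ b ∧ k ≤ alphaG g b ∧ Icc d b ⊆ Q := by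
  rcases Nat.eq_zero_or_pos k with rfl | hk0
  · exact ⟨d, le_rfl, Nat.zero_le _, by simpa using hd⟩
  have hne : {k | ∃ P : IntervalPartitionN3 Q, ∀ p ∈ P.pairs, k ≤ alphaG g p.2}.Nonempty := by
    refine Set.nonempty_iff_ne_empty.mpr fun he => ?_
    rw [sdepthG, he, csSup_empty, bot_eq_zero'] at hk
    omega
  obtain ⟨P, hP⟩ := Nat.sSup_mem hne (bddAbove_sdepthG_set ⟨d, hd⟩)
  obtain ⟨p, hp, hdp⟩ := P.covers d hd
  exact ⟨p.2, (mem_Icc.mp hdp).2, hk.trans (hP p hp),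
    (Icc_subset_Icc_left (mem_Icc.mp hdp).1).trans (P.sub p hp)⟩

lemma sdepthG_le_two {d : Fin 3 → ℕ} (hd : d ∈ Q) (hg : g ∉ Q) : sdepthG g Q ≤ 2 := by
  by_contra! h
  obtain ⟨b, hdb, hb, hsub⟩ := exists_le_of_le_sdepthG h hd
  obtain rfl := eq_of_three_le_alphaG hb
  exact hg (hsub (right_mem_Icc.mpr hdb))

end StanleyDepth

lemma le_fin_three_iff {a b : Fin 3 → ℕ} : a ≤ b ↔ a 0 ≤ b 0 ∧ a 1 ≤ b 1 ∧ a 2 ≤ b 2 := by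
  simp [Pi.le_def, Fin.forall_fin_succ]

lemma mem_Icc_fin_three_iff {a b c : Fin 3 → ℕ} : c ∈ Icc a b ↔
    (a 0 ≤ c 0 ∧ c 0 ≤ b 0) ∧ (a 1 ≤ c 1 ∧ c 1 ≤ b 1) ∧ (a 2 ≤ c 2 ∧ c 2 ≤ b 2) := by
  rw [mem_Icc, le_fin_three_iff, le_fin_three_iff]
  tauto

lemma mem_Icc_vec_iff {c : Fin 3 → ℕ} {a₀ a₁ a₂ b₀ b₁ b₂ : ℕ} :
    c ∈ Icc ![a₀, a₁, a₂] ![b₀, b₁, b₂] ↔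
      (a₀ ≤ c 0 ∧ c 0 ≤ b₀) ∧ (a₁ ≤ c 1 ∧ c 1 ≤ b₁) ∧ (a₂ ≤ c 2 ∧ c 2 ≤ b₂) :=
  mem_Icc_fin_three_iff

def IsUpperSetIn (g : Fin 3 → ℕ) (U : Finset (Fin 3 → ℕ)) : Prop :=
  U ⊆ Icc 0 g ∧ ∀ c ∈ U, ∀ d, c ≤ d → d ≤ g → d ∈ U

namespace IsUpperSetIn

variable {g : Fin 3 → ℕ} {U : Finset (Fin 3 → ℕ)}

lemma le_top (hU : IsUpperSetIn g U) {c : Fin 3 → ℕ} (hc : c ∈ U) : c ≤ g :=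
  (mem_Icc.mp (hU.1 hc)).2

lemma top_mem (hU : IsUpperSetIn g U) (hne : U.Nonempty) : g ∈ U := by
  obtain ⟨c, hc⟩ := hne
  exact hU.2 c hc g (hU.le_top hc) le_rfl

lemma Icc_subset (hU : IsUpperSetIn g U) {a b : Fin 3 → ℕ} (ha : a ∈ U) (hb : b ≤ g) :
    Icc a b ⊆ U := fun d hd =>
  hU.2 a ha d (mem_Icc.mp hd).1 ((mem_Icc.mp hd).2.trans hb)

lemma coord_le (hU : IsUpperSetIn g U) {x y t : ℕ} (h : ![x, y, t] ∈ U) :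
    x ≤ g 0 ∧ y ≤ g 1 ∧ t ≤ g 2 :=
  le_fin_three_iff.mp (hU.le_top h)

lemma vec_mem (hU : IsUpperSetIn g U) {x y t x' y' t' : ℕ} (h : ![x, y, t] ∈ U)
    (hx : x ≤ x') (hy : y ≤ y') (ht : t ≤ t')
    (hx' : x' ≤ g 0) (hy' : y' ≤ g 1) (ht' : t' ≤ g 2) : ![x', y', t'] ∈ U :=
  hU.2 _ h _ (le_fin_three_iff.mpr ⟨hx, hy, ht⟩) (le_fin_three_iff.mpr ⟨hx', hy', ht'⟩)

end IsUpperSetIn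

section Lines

variable {g : Fin 3 → ℕ} {U : Finset (Fin 3 → ℕ)}

noncomputable def linePiece (g : Fin 3 → ℕ) (U : Finset (Fin 3 → ℕ)) (c : Fin 3 → ℕ) :
    (Fin 3 → ℕ) × (Fin 3 → ℕ) :=
  (![sInf {x | ![x, c 1, c 2] ∈ U}, c 1, c 2], ![g 0, c 1, c 2])

lemma IsUpperSetIn.isPieceMap_linePiece (hU : IsUpperSetIn g U) :
    IsPieceMap U (linePiece g U) := by
  intro c hc
  have hc' : ![c 0, c 1, c 2] ∈ U := (FinVec.etaExpand_eq c).symm ▸ hc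
  have hmin : ![sInf {x | ![x, c 1, c 2] ∈ U}, c 1, c 2] ∈ U :=
    Nat.sInf_mem (s := {x | ![x, c 1, c 2] ∈ U}) ⟨c 0, hc'⟩
  obtain ⟨hc0, hc1, hc2⟩ := hU.coord_le hc'
  refine ⟨?_, hU.Icc_subset hmin (le_fin_three_iff.mpr ⟨le_rfl, hc1, hc2⟩), fun d hd => ?_⟩
  · exact mem_Icc_vec_iff.mpr ⟨⟨Nat.sInf_le hc', hc0⟩, ⟨le_rfl, le_rfl⟩, ⟨le_rfl, le_rfl⟩⟩
  · obtain ⟨-, ⟨hd1, hd1'⟩, ⟨hd2, hd2'⟩⟩ := mem_Icc_vec_iff.mp hd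
    simp only [linePiece, le_antisymm hd1' hd1, le_antisymm hd2' hd2]

lemma IsUpperSetIn.one_le_sdepthG (hU : IsUpperSetIn g U) (hne : U.Nonempty) :
    1 ≤ sdepthG g U :=
  hU.isPieceMap_linePiece.le_sdepthG hne fun _ _ => one_le_alphaG (i := 0) rfl

end Lines

section ColumnsAndRows

variable {g : Fin 3 → ℕ} {U : Finset (Fin 3 → ℕ)}

noncomputable def entry (U : Finset (Fin 3 → ℕ)) (x y : ℕ) : ℕ := sInf {t | ![x, y, t] ∈ U}

lemma entry_mem {x y t : ℕ} (h : ![x, y, t] ∈ U) : ![x, y, entry U x y] ∈ U :=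
  Nat.sInf_mem (s := {t | ![x, y, t] ∈ U}) ⟨t, h⟩

lemma entry_le {x y t : ℕ} (h : ![x, y, t] ∈ U) : entry U x y ≤ t :=
  Nat.sInf_le h

lemma notMem_of_lt_entry {x y t : ℕ} (h : t < entry U x y) : ![x, y, t] ∉ U :=
  Nat.notMem_of_lt_sInf h

lemma IsUpperSetIn.entry_anti (hU : IsUpperSetIn g U) {x y t x' y' : ℕ} (h : ![x, y, t] ∈ U)
    (hx : x ≤ x') (hy : y ≤ y') (hx' : x' ≤ g 0) (hy' : y' ≤ g 1) : entry U x' y' ≤ entry U x y :=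
  entry_le (hU.vec_mem (entry_mem h) hx hy le_rfl hx' hy' (hU.coord_le (entry_mem h)).2.2)

noncomputable def colPiece (g : Fin 3 → ℕ) (U : Finset (Fin 3 → ℕ)) (x t : ℕ) :
    (Fin 3 → ℕ) × (Fin 3 → ℕ) :=
  (![x, sInf {y | ![x, y, t] ∈ U}, t], ![x, g 1, g 2])

noncomputable def rowPiece (g : Fin 3 → ℕ) (U : Finset (Fin 3 → ℕ)) (y t : ℕ) :
    (Fin 3 → ℕ) × (Fin 3 → ℕ) :=
  (![sInf {x | ![x, y, t] ∈ U ∧ ![x, g 1, t - 1] ∈ U}, y, t], ![g 0, y, g 2])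

noncomputable def colRowPiece (g : Fin 3 → ℕ) (U : Finset (Fin 3 → ℕ)) (c : Fin 3 → ℕ) :
    (Fin 3 → ℕ) × (Fin 3 → ℕ) :=
  if entry U (c 0) (c 1) = entry U (c 0) (g 1) then colPiece g U (c 0) (entry U (c 0) (c 1))
  else rowPiece g U (c 1) (entry U (c 0) (c 1))

lemma IsUpperSetIn.colRowPiece_of_entry_eq (hU : IsUpperSetIn g U) {c : Fin 3 → ℕ} (hc : c ∈ U)
    (h : entry U (c 0) (c 1) = entry U (c 0) (g 1)) :
    let p := colPiece g U (c 0) (entry U (c 0) (c 1))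
    c ∈ Icc p.1 p.2 ∧ Icc p.1 p.2 ⊆ U ∧ ∀ d ∈ Icc p.1 p.2, colRowPiece g U d = p := by
  intro p
  set t := entry U (c 0) (c 1)
  have hc' : ![c 0, c 1, c 2] ∈ U := (FinVec.etaExpand_eq c).symm ▸ hc
  have hct : ![c 0, c 1, t] ∈ U := entry_mem hc'
  have hY : ![c 0, sInf {y | ![c 0, y, t] ∈ U}, t] ∈ U :=
    Nat.sInf_mem (s := {y | ![c 0, y, t] ∈ U}) ⟨c 1, hct⟩
  obtain ⟨hc0, hc1, hc2⟩ := hU.coord_le hc'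
  obtain ⟨-, -, ht⟩ := hU.coord_le hct
  refine ⟨?_, hU.Icc_subset hY (le_fin_three_iff.mpr ⟨hc0, le_rfl, le_rfl⟩), fun d hd => ?_⟩
  · exact mem_Icc_vec_iff.mpr ⟨⟨le_rfl, le_rfl⟩, ⟨Nat.sInf_le hct, hc1⟩, ⟨entry_le hc', hc2⟩⟩
  obtain ⟨⟨hd0, hd0'⟩, ⟨hd1, hd1'⟩, -⟩ := mem_Icc_vec_iff.mp hd
  have hdx : d 0 = c 0 := le_antisymm hd0' hd0
  have hdt : ![c 0, d 1, t] ∈ U := hU.vec_mem hY le_rfl hd1 le_rfl hc0 hd1' ht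
  have hentry : entry U (c 0) (d 1) = t :=
    le_antisymm (entry_le hdt) (h ▸ hU.entry_anti hdt le_rfl hd1' hc0 le_rfl)
  simp only [colRowPiece, hdx, hentry, ← h, if_true, p, t]

lemma IsUpperSetIn.colRowPiece_of_entry_ne (hU : IsUpperSetIn g U)
    (hrow : ∀ x y t, ![x, y, t] ∉ U → ![x, g 1, t] ∈ U → ![x, y, g 2] ∈ U → ![g 0, y, t] ∉ U)
    {c : Fin 3 → ℕ} (hc : c ∈ U) (h : entry U (c 0) (c 1) ≠ entry U (c 0) (g 1)) :
    let p := rowPiece g U (c 1) (entry U (c 0) (c 1))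
    c ∈ Icc p.1 p.2 ∧ Icc p.1 p.2 ⊆ U ∧ ∀ d ∈ Icc p.1 p.2, colRowPiece g U d = p := by
  intro p
  set t := entry U (c 0) (c 1)
  have hc' : ![c 0, c 1, c 2] ∈ U := (FinVec.etaExpand_eq c).symm ▸ hc
  obtain ⟨hc0, hc1, hc2⟩ := hU.coord_le hc'
  have hct : ![c 0, c 1, t] ∈ U := entry_mem hc'
  obtain ⟨-, -, ht⟩ := hU.coord_le hct
  have hlt : entry U (c 0) (g 1) < t :=
    (hU.entry_anti hct le_rfl hc1 hc0 le_rfl).lt_of_ne (Ne.symm h)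
  have htop : ![c 0, g 1, t - 1] ∈ U :=
    hU.vec_mem (entry_mem (hU.vec_mem hct le_rfl hc1 le_rfl hc0 le_rfl ht))
      le_rfl le_rfl (by omega) hc0 le_rfl (by omega)
  have hX : ![sInf {x | ![x, c 1, t] ∈ U ∧ ![x, g 1, t - 1] ∈ U}, c 1, t] ∈ U ∧
      ![sInf {x | ![x, c 1, t] ∈ U ∧ ![x, g 1, t - 1] ∈ U}, g 1, t - 1] ∈ U :=
    Nat.sInf_mem (s := {x | ![x, c 1, t] ∈ U ∧ ![x, g 1, t - 1] ∈ U}) ⟨c 0, hct, htop⟩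
  refine ⟨?_, hU.Icc_subset hX.1 (le_fin_three_iff.mpr ⟨le_rfl, hc1, le_rfl⟩), fun d hd => ?_⟩
  · exact mem_Icc_vec_iff.mpr
      ⟨⟨Nat.sInf_le ⟨hct, htop⟩, hc0⟩, ⟨le_rfl, le_rfl⟩, ⟨entry_le hc', hc2⟩⟩
  obtain ⟨⟨hd0, hd0'⟩, ⟨hd1, hd1'⟩, -⟩ := mem_Icc_vec_iff.mp hd
  have hdy : d 1 = c 1 := le_antisymm hd1' hd1
  have hdt : ![d 0, c 1, t] ∈ U := hU.vec_mem hX.1 hd0 le_rfl le_rfl hd0' hc1 ht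
  have hdtop : ![d 0, g 1, t - 1] ∈ U :=
    hU.vec_mem hX.2 hd0 le_rfl le_rfl hd0' le_rfl (by omega)
  have hrow_empty : ![g 0, c 1, t - 1] ∉ U :=
    hrow _ _ _ (notMem_of_lt_entry (by omega)) htop
      (hU.vec_mem hc' le_rfl le_rfl hc2 hc0 hc1 le_rfl)
  have hentry : entry U (d 0) (c 1) = t := by
    refine le_antisymm (entry_le hdt) (not_lt.mp fun hlt' => hrow_empty ?_)
    exact hU.vec_mem (entry_mem hdt) hd0' le_rfl (by omega) le_rfl hc1 (by omega)
  have hentry_top : entry U (d 0) (g 1) ≠ t := by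
    have := entry_le hdtop
    omega
  simp only [colRowPiece, hdy, hentry, Ne.symm hentry_top, if_false, p, t]

lemma IsUpperSetIn.two_le_sdepthG (hU : IsUpperSetIn g U) (hne : U.Nonempty)
    (hrow : ∀ x y t, ![x, y, t] ∉ U → ![x, g 1, t] ∈ U → ![x, y, g 2] ∈ U → ![g 0, y, t] ∉ U) :
    2 ≤ sdepthG g U := by
  have hf : IsPieceMap U (colRowPiece g U) := by
    intro c hc
    by_cases h : entry U (c 0) (c 1) = entry U (c 0) (g 1)
    · simpa only [colRowPiece, if_pos h] using hU.colRowPiece_of_entry_eq hc h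
    · simpa only [colRowPiece, if_neg h] using hU.colRowPiece_of_entry_ne hrow hc h
  refine hf.le_sdepthG hne fun c _ => ?_
  unfold colRowPiece
  split_ifs
  · exact two_le_alphaG (i := 1) (j := 2) (by decide) rfl rfl
  · exact two_le_alphaG (i := 0) (j := 2) (by decide) rfl rfl

end ColumnsAndRows

section Complement

variable {g : Fin 3 → ℕ} {U : Finset (Fin 3 → ℕ)}

lemma IsUpperSetIn.notMem_of_one_le_sdepthG_compl (hU : IsUpperSetIn g U)
    (hD : 1 ≤ sdepthG g (Icc 0 g \ U)) {x y t : ℕ} (h : ![x, y, t] ∉ U)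
    (hy : ![x, g 1, t] ∈ U) (ht : ![x, y, g 2] ∈ U) : ![g 0, y, t] ∉ U := by
  obtain ⟨hx, -, ht'⟩ := hU.coord_le hy
  obtain ⟨-, hy', -⟩ := hU.coord_le ht
  have hd : ![x, y, t] ∈ Icc 0 g \ U :=
    mem_sdiff.mpr
      ⟨mem_Icc.mpr ⟨fun _ => Nat.zero_le _, le_fin_three_iff.mpr ⟨hx, hy', ht'⟩⟩, h⟩
  obtain ⟨b, hdb, hb, hsub⟩ := exists_le_of_le_sdepthG hD hd
  obtain ⟨i, hi⟩ := exists_eq_of_one_le_alphaG hb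
  obtain ⟨hb0, hb1, hb2⟩ := le_fin_three_iff.mp hdb
  have hmem {e : Fin 3 → ℕ} (he : e ∈ Icc ![x, y, t] b) : e ∉ U := (mem_sdiff.mp (hsub he)).2
  fin_cases i
  · exact hmem (mem_Icc_fin_three_iff.mpr ⟨⟨hx, hi.ge⟩, ⟨le_rfl, hb1⟩, ⟨le_rfl, hb2⟩⟩)
  · exact absurd hy
      (hmem (mem_Icc_fin_three_iff.mpr ⟨⟨le_rfl, hb0⟩, ⟨hy', hi.ge⟩, ⟨le_rfl, hb2⟩⟩))
  · exact absurd ht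
      (hmem (mem_Icc_fin_three_iff.mpr ⟨⟨le_rfl, hb0⟩, ⟨le_rfl, hb1⟩, ⟨ht', hi.ge⟩⟩))

lemma IsUpperSetIn.three_le_sdepthG_of_two_le_sdepthG_compl (hU : IsUpperSetIn g U)
    (hne : U.Nonempty) (hD : 2 ≤ sdepthG g (Icc 0 g \ U)) : 3 ≤ sdepthG g U := by
  set a := U.inf' hne id
  have ha_le {c : Fin 3 → ℕ} (hc : c ∈ U) : a ≤ c := inf'_le id hc
  have hag : a ≤ g := (ha_le hne.choose_spec).trans (hU.le_top hne.choose_spec)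
  have haU : a ∈ U := by
    by_contra haU
    obtain ⟨b, hab, hb, hsub⟩ := exists_le_of_le_sdepthG hD
      (mem_sdiff.mpr ⟨mem_Icc.mpr ⟨fun _ => Nat.zero_le _, hag⟩, haU⟩)
    obtain ⟨k, hk⟩ := exists_forall_ne_eq_of_two_le_alphaG hb
    obtain ⟨u, hu, huk⟩ := exists_mem_eq_inf' hne fun c => c k
    have hak : a k = u k := (Finset.inf'_apply hne id k).trans huk
    have hub : u ≤ b := fun i => by
      rcases eq_or_ne i k with rfl | hik
      · exact hak ▸ hab i
      · exact (hk i hik).symm ▸ hU.le_top hu i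
    exact (mem_sdiff.mp (hsub (mem_Icc.mpr ⟨ha_le hu, hub⟩))).2 hu
  have hf : IsPieceMap U fun _ => (a, g) := fun c hc =>
    ⟨mem_Icc.mpr ⟨ha_le hc, hU.le_top hc⟩, hU.Icc_subset haU le_rfl, fun _ _ => rfl⟩
  exact hf.le_sdepthG hne fun _ _ => alphaG_self.ge

end Complement

/-- If `U` is a nonempty up set of `P_g = {c ∈ ℕ³ : c ≤ g}` whose complement
`D = P_g \ U` is also nonempty, then `sdepth_g(U) > sdepth_g(D)`. -/
theorem sdepth_upset_gt_sdepth_downset_three (g : Fin 3 → ℕ)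
    (U : Finset (Fin 3 → ℕ)) (hUsub : U ⊆ Finset.Icc 0 g)
    (hup : ∀ c ∈ U, ∀ d, c ≤ d → d ≤ g → d ∈ U)
    (hUne : U.Nonempty) (hDne : (Finset.Icc 0 g \ U).Nonempty) :
    sdepthG g (Finset.Icc 0 g \ U) < sdepthG g U := by
  have hU : IsUpperSetIn g U := ⟨hUsub, hup⟩
  obtain ⟨d, hd⟩ := hDne
  have hD : sdepthG g (Icc 0 g \ U) ≤ 2 :=
    sdepthG_le_two hd fun hg => (mem_sdiff.mp hg).2 (hU.top_mem hUne)
  have h₁ : 1 ≤ sdepthG g U := hU.one_le_sdepthG hUne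
  have h₂ (h : 1 ≤ sdepthG g (Icc 0 g \ U)) : 2 ≤ sdepthG g U :=
    hU.two_le_sdepthG hUne fun _ _ _ => hU.notMem_of_one_le_sdepthG_compl h
  have h₃ := hU.three_le_sdepthG_of_two_le_sdepthG_compl hUne
  omega
end

section
/- Suppose there exist an integer n ≥ 1 and a down set D ⊆ 2^[n] with ∅ ∈ D and nonempty complement U = 2^[n] \ D such that sdepth(U) ≤ sdepth(D). Then there exist an integer n' ≤ n and a down set D' ⊆ 2^[n'] with ∅ ∈ D' and nonempty complement U' = 2^[n'] \ D' such that, setting k = sdepth(D'): (1) sdepth(U') ≤ sdepth(D') and every maximal element of D' has exactly k elements (D' is a pure simplicial complex of dimension k−1); (2) the union of the maximal elements of D' equals [n']; and (3) the intersection of the maximal elements of D' is empty. -/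
/-!
Induction on `n`. If some vertex `x` lies in no face of `D`, or is a cone point
(`S ∈ D → S ∪ {x} ∈ D`), deleting `x` gives a down set `D₀ ⊆ 2^[n-1]`, with complement `U₀`,
which is again a counterexample: in the first case `U` is the lift of `U₀` together with the
interval `[{x}, [n]]`, so `sdepth U₀ ≤ sdepth U ≤ sdepth D ≤ sdepth D₀`; in the second `U` is
the cone over `U₀`, so `sdepth U₀ + 1 ≤ sdepth U ≤ sdepth D ≤ sdepth D₀ + 1`.

Otherwise let `k = sdepth D` and truncate `D` to its sets of size `≤ k`. Cutting every interval
of an optimal partition of `D` at level `k` shows that the truncation still has Stanley depth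
`k`, and all its facets have size `k`. A partition of its complement with tops of size `> k`
becomes one of `U` by removing the sets of `D` one level at a time: each of them is the bottom
of its interval, and `[A, B] \ {A}` splits into intervals with tops larger than `A`. Hence the
truncation is again a counterexample; since every vertex lies in a face and none is a cone
point, its facets cover `[n]` and have empty intersection.
-/

open Finset

/-- An interval partition of a family `Q` of subsets of `[n]` (identified with `Fin n`):
a finite collection of nonempty intervals `[A,B]`, each contained in `Q`, pairwise
disjoint, and covering `Q`. -/
structure IntervalPartition (n : ℕ) (Q : Finset (Finset (Fin n))) where
  pairs : Finset (Finset (Fin n) × Finset (Fin n))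
  le : ∀ p ∈ pairs, p.1 ⊆ p.2
  sub : ∀ p ∈ pairs, Finset.Icc p.1 p.2 ⊆ Q
  disj : ∀ p ∈ pairs, ∀ q ∈ pairs, p ≠ q →
    Disjoint (Finset.Icc p.1 p.2) (Finset.Icc q.1 q.2)
  covers : ∀ C ∈ Q, ∃ p ∈ pairs, C ∈ Finset.Icc p.1 p.2

/-- The Stanley depth of a family `Q`: the largest `k` such that some interval
partition of `Q` has every interval's maximal element of size at least `k`. -/
noncomputable def sdepth {n : ℕ} (Q : Finset (Finset (Fin n))) : ℕ :=
  sSup {k | ∃ P : IntervalPartition n Q, ∀ p ∈ P.pairs, k ≤ p.2.card}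

/-- `D` is a down set in `2^[n]`. -/
def IsDownSet {n : ℕ} (D : Finset (Finset (Fin n))) : Prop :=
  ∀ B ∈ D, ∀ A, A ⊆ B → A ∈ D

/-- `B` is a maximal element of the family `D`. -/
def MaxElt {n : ℕ} (D : Finset (Finset (Fin n))) (B : Finset (Fin n)) : Prop :=
  B ∈ D ∧ ∀ C ∈ D, B ⊆ C → B = C

section

variable {n : ℕ} {Q Q₁ Q₂ : Finset (Finset (Fin n))} {A B S : Finset (Fin n)} {c k : ℕ}

-- For nonempty `Q` this is `k ≤ sdepth Q` (`le_sdepth_iff`); unlike `sdepth`, it has no junk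
-- value at `Q = ∅`.
def HasDepthPartition (Q : Finset (Finset (Fin n))) (k : ℕ) : Prop :=
  ∃ P : IntervalPartition n Q, ∀ p ∈ P.pairs, k ≤ p.2.card

theorem IntervalPartition.mem_iff (P : IntervalPartition n Q) :
    S ∈ Q ↔ ∃ p ∈ P.pairs, S ∈ Icc p.1 p.2 :=
  ⟨P.covers S, fun ⟨p, hp, hS⟩ => P.sub p hp hS⟩

theorem IntervalPartition.snd_mem (P : IntervalPartition n Q)
    {p : Finset (Fin n) × Finset (Fin n)} (hp : p ∈ P.pairs) : p.2 ∈ Q :=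
  P.sub p hp (mem_Icc.2 ⟨P.le p hp, subset_rfl⟩)

theorem IntervalPartition.fst_mem (P : IntervalPartition n Q)
    {p : Finset (Fin n) × Finset (Fin n)} (hp : p ∈ P.pairs) : p.1 ∈ Q :=
  P.sub p hp (mem_Icc.2 ⟨subset_rfl, P.le p hp⟩)

theorem IntervalPartition.biUnion_eq (P : IntervalPartition n Q) :
    P.pairs.biUnion (fun p => Icc p.1 p.2) = Q := by
  ext S
  simp only [mem_biUnion, P.mem_iff]

theorem HasDepthPartition.of_pairs (s : Finset (Finset (Fin n) × Finset (Fin n)))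
    (hle : ∀ p ∈ s, p.1 ⊆ p.2)
    (hdisj : ∀ p ∈ s, ∀ q ∈ s, p ≠ q → Disjoint (Icc p.1 p.2) (Icc q.1 q.2))
    (hmem : ∀ S, S ∈ Q ↔ ∃ p ∈ s, S ∈ Icc p.1 p.2) (hc : ∀ p ∈ s, c ≤ p.2.card) :
    HasDepthPartition Q c :=
  ⟨⟨s, hle, fun p hp _ hS => (hmem _).2 ⟨p, hp, hS⟩, hdisj, fun S hS => (hmem S).1 hS⟩, hc⟩

theorem hasDepthPartition_empty : HasDepthPartition (∅ : Finset (Finset (Fin n))) k :=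
  HasDepthPartition.of_pairs ∅ (by simp) (by simp) (by simp) (by simp)

theorem hasDepthPartition_Icc (hAB : A ⊆ B) : HasDepthPartition (Icc A B) B.card :=
  HasDepthPartition.of_pairs {(A, B)} (by simpa using hAB) (by simp) (by simp) (by simp)

namespace HasDepthPartition

theorem mono (h : HasDepthPartition Q k) (hck : c ≤ k) : HasDepthPartition Q c :=
  let ⟨P, hP⟩ := h
  ⟨P, fun p hp => hck.trans (hP p hp)⟩

theorem le_of_forall_card_le (h : HasDepthPartition Q k) (hQ : Q.Nonempty)
    (hcard : ∀ S ∈ Q, S.card ≤ c) : k ≤ c := by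
  obtain ⟨P, hP⟩ := h
  obtain ⟨S, hS⟩ := hQ
  obtain ⟨p, hp, -⟩ := P.covers S hS
  exact (hP p hp).trans (hcard _ (P.snd_mem hp))

theorem le_card_of_maxElt (h : HasDepthPartition Q k) {F : Finset (Fin n)} (hF : MaxElt Q F) :
    k ≤ F.card := by
  obtain ⟨P, hP⟩ := h
  obtain ⟨p, hp, hFp⟩ := P.covers F hF.1
  rw [hF.2 p.2 (P.snd_mem hp) (mem_Icc.1 hFp).2]
  exact hP p hp

theorem union (h₁ : HasDepthPartition Q₁ k) (h₂ : HasDepthPartition Q₂ k) (hQ : Disjoint Q₁ Q₂) :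
    HasDepthPartition (Q₁ ∪ Q₂) k := by
  obtain ⟨P₁, hP₁⟩ := h₁
  obtain ⟨P₂, hP₂⟩ := h₂
  have cross : ∀ p ∈ P₁.pairs, ∀ q ∈ P₂.pairs, Disjoint (Icc p.1 p.2) (Icc q.1 q.2) :=
    fun p hp q hq => hQ.mono (P₁.sub p hp) (P₂.sub q hq)
  refine of_pairs (P₁.pairs ∪ P₂.pairs) ?_ ?_ ?_ ?_
  · intro p hp
    rcases mem_union.1 hp with hp | hp
    exacts [P₁.le p hp, P₂.le p hp]
  · intro p hp q hq hpq
    rcases mem_union.1 hp with hp | hp <;> rcases mem_union.1 hq with hq | hq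
    exacts [P₁.disj p hp q hq hpq, cross p hp q hq, (cross q hq p hp).symm, P₂.disj p hp q hq hpq]
  · intro S
    simp only [mem_union, P₁.mem_iff, P₂.mem_iff, or_and_right, exists_or]
  · intro p hp
    rcases mem_union.1 hp with hp | hp
    exacts [hP₁ p hp, hP₂ p hp]

theorem biUnion {ι : Type*} [DecidableEq ι] {s : Finset ι} {Q : ι → Finset (Finset (Fin n))}
    (hQ : (s : Set ι).PairwiseDisjoint Q) (h : ∀ i ∈ s, HasDepthPartition (Q i) k) :
    HasDepthPartition (s.biUnion Q) k := by
  induction s using Finset.induction_on with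
  | empty => exact hasDepthPartition_empty
  | insert i s hi ih =>
    rw [coe_insert] at hQ
    rw [biUnion_insert]
    refine (h i (mem_insert_self i s)).union
      (ih (hQ.subset (Set.subset_insert _ _)) fun j hj => h j (mem_insert_of_mem hj)) ?_
    refine (disjoint_biUnion_right _ _ _).2 fun j hj => hQ (Set.mem_insert _ _) ?_ ?_
    · exact Set.mem_insert_of_mem _ hj
    · rintro rfl; exact hi hj

end HasDepthPartition

theorem hasDepthPartition_biUnion_Icc {ι : Type*} [DecidableEq ι] {s : Finset ι}
    {A B : ι → Finset (Fin n)} (hAB : ∀ i ∈ s, A i ⊆ B i)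
    (hdisj : (s : Set ι).PairwiseDisjoint fun i => Icc (A i) (B i))
    (hc : ∀ i ∈ s, c ≤ (B i).card) :
    HasDepthPartition (s.biUnion fun i => Icc (A i) (B i)) c :=
  HasDepthPartition.biUnion hdisj fun i hi => (hasDepthPartition_Icc (hAB i hi)).mono (hc i hi)

theorem hasDepthPartition_of_forall_le_card (h : ∀ S ∈ Q, k ≤ S.card) : HasDepthPartition Q k := by
  have hQ : Q = Q.biUnion fun S => Icc S S := by simp
  rw [hQ]
  refine HasDepthPartition.biUnion ?_ fun S hS => (hasDepthPartition_Icc subset_rfl).mono (h S hS)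
  intro _ _ _ _ hST
  simpa using hST

theorem le_sdepth_iff (hQ : Q.Nonempty) : k ≤ sdepth Q ↔ HasDepthPartition Q k := by
  have hne : {k | HasDepthPartition Q k}.Nonempty :=
    ⟨0, hasDepthPartition_of_forall_le_card fun _ _ => Nat.zero_le _⟩
  have hbdd : BddAbove {k | HasDepthPartition Q k} :=
    ⟨n, fun k hk => hk.le_of_forall_card_le hQ fun S _ => (card_le_univ S).trans_eq (by simp)⟩
  exact ⟨fun hk => (Nat.sSup_mem hne hbdd).mono hk, fun hk => le_csSup hbdd hk⟩

theorem hasDepthPartition_sdepth (hQ : Q.Nonempty) : HasDepthPartition Q (sdepth Q) :=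
  (le_sdepth_iff hQ).1 le_rfl

theorem sdepth_le_of_forall_card_le (hQ : Q.Nonempty) (h : ∀ S ∈ Q, S.card ≤ c) : sdepth Q ≤ c :=
  (hasDepthPartition_sdepth hQ).le_of_forall_card_le hQ h

theorem one_le_sdepth (hQ : Q.Nonempty) (h : ∅ ∉ Q) : 1 ≤ sdepth Q :=
  (le_sdepth_iff hQ).2 <| hasDepthPartition_of_forall_le_card fun _ hS =>
    card_pos.2 (nonempty_iff_ne_empty.2 fun hS' => h (hS' ▸ hS))

theorem sdepth_le_card_of_maxElt {F : Finset (Fin n)} (hF : MaxElt Q F) : sdepth Q ≤ F.card :=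
  (hasDepthPartition_sdepth ⟨F, hF.1⟩).le_card_of_maxElt hF

theorem exists_maxElt_superset (hS : S ∈ Q) : ∃ F, MaxElt Q F ∧ S ⊆ F := by
  obtain ⟨F, hSF, hF⟩ := Q.exists_le_maximal hS
  exact ⟨F, ⟨hF.1, fun C hC hFC => le_antisymm hFC (hF.2 hC hFC)⟩, hSF⟩

theorem Icc_eq_union_Icc_insert_Icc_erase (y : Fin n) :
    Icc A B = Icc (insert y A) B ∪ Icc A (B.erase y) := by
  ext S
  simp only [mem_union, mem_Icc, insert_subset_iff, subset_erase]
  by_cases hyS : y ∈ S <;> tauto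

theorem disjoint_Icc_insert_Icc_erase {y : Fin n} {A' B' : Finset (Fin n)} :
    Disjoint (Icc (insert y A) B) (Icc A' (B'.erase y)) := by
  refine disjoint_left.2 fun S h₁ h₂ => ?_
  exact (subset_erase.1 (mem_Icc.1 h₂).2).2 ((mem_Icc.1 h₁).1 (mem_insert_self y A))

theorem sdiff_insert_eq_erase_sdiff (y : Fin n) : B \ insert y A = B.erase y \ A := by
  rw [sdiff_insert, erase_sdiff_comm]

theorem card_erase_sdiff_add_one {y : Fin n} (hyB : y ∈ B) (hyA : y ∉ A) :
    (B.erase y \ A).card + 1 = (B \ A).card := by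
  rw [erase_sdiff_comm, card_erase_add_one (mem_sdiff.2 ⟨hyB, hyA⟩)]

theorem hasDepthPartition_Icc_filter_card_le (hAB : A ⊆ B) (hk : k ≤ B.card) :
    HasDepthPartition ((Icc A B).filter (·.card ≤ k)) k := by
  induction hd : (B \ A).card generalizing A B with
  | zero =>
    obtain rfl : A = B := le_antisymm hAB (sdiff_eq_empty_iff_subset.1 (card_eq_zero.1 hd))
    rw [Icc_self, filter_singleton]
    rcases hk.eq_or_lt with rfl | hk
    · simpa using hasDepthPartition_Icc (subset_refl A)
    · simpa [hk.not_ge] using hasDepthPartition_empty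
  | succ d ih =>
    rcases hk.eq_or_lt with rfl | hk
    · rw [filter_true_of_mem fun S hS => card_le_card (mem_Icc.1 hS).2]
      exact hasDepthPartition_Icc hAB
    obtain ⟨y, hy⟩ : (B \ A).Nonempty := card_pos.1 (by omega)
    obtain ⟨hyB, hyA⟩ := mem_sdiff.1 hy
    have hd₂ : (B.erase y \ A).card = d := by have := card_erase_sdiff_add_one hyB hyA; omega
    have hd₁ : (B \ insert y A).card = d := by rw [sdiff_insert_eq_erase_sdiff, hd₂]
    rw [Icc_eq_union_Icc_insert_Icc_erase y, filter_union]
    refine (ih (insert_subset hyB hAB) hk.le hd₁).union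
      (ih (subset_erase.2 ⟨hAB, hyA⟩) ?_ hd₂)
      (disjoint_filter_filter disjoint_Icc_insert_Icc_erase)
    rw [card_erase_of_mem hyB]
    omega

theorem hasDepthPartition_Icc_erase (hAB : A ⊆ B) :
    HasDepthPartition ((Icc A B).erase A) (A.card + 1) := by
  induction hd : (B \ A).card generalizing B with
  | zero =>
    obtain rfl : A = B := le_antisymm hAB (sdiff_eq_empty_iff_subset.1 (card_eq_zero.1 hd))
    simpa using hasDepthPartition_empty
  | succ d ih =>
    obtain ⟨y, hy⟩ : (B \ A).Nonempty := card_pos.1 (by omega)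
    obtain ⟨hyB, hyA⟩ := mem_sdiff.1 hy
    have hd₂ : (B.erase y \ A).card = d := by have := card_erase_sdiff_add_one hyB hyA; omega
    have hA : A ∉ Icc (insert y A) B := fun h => hyA ((mem_Icc.1 h).1 (mem_insert_self y A))
    rw [Icc_eq_union_Icc_insert_Icc_erase y, erase_union_distrib, erase_eq_of_notMem hA]
    refine HasDepthPartition.union ?_ (ih (subset_erase.2 ⟨hAB, hyA⟩) hd₂)
      (disjoint_Icc_insert_Icc_erase.mono_right (erase_subset _ _))
    refine (hasDepthPartition_Icc (insert_subset hyB hAB)).mono ?_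
    rw [← card_insert_of_notMem hyA]
    exact card_le_card (insert_subset hyB hAB)

theorem IntervalPartition.hasDepthPartition_filter (P : IntervalPartition n Q)
    (r : Finset (Fin n) → Prop) [DecidablePred r]
    (h : ∀ p ∈ P.pairs, HasDepthPartition ((Icc p.1 p.2).filter r) c) :
    HasDepthPartition (Q.filter r) c := by
  rw [← P.biUnion_eq, filter_biUnion]
  refine HasDepthPartition.biUnion (fun p hp q hq hpq => ?_) h
  exact disjoint_filter_filter (P.disj p hp q hq hpq)

theorem HasDepthPartition.filter_card_le (h : HasDepthPartition Q k) :
    HasDepthPartition (Q.filter (·.card ≤ k)) k := by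
  obtain ⟨P, hP⟩ := h
  exact P.hasDepthPartition_filter _ fun p hp =>
    hasDepthPartition_Icc_filter_card_le (P.le p hp) (hP p hp)

theorem HasDepthPartition.filter_notMem (x : Fin n) (h : HasDepthPartition Q c) :
    HasDepthPartition (Q.filter (x ∉ ·)) (c - 1) := by
  obtain ⟨P, hP⟩ := h
  refine P.hasDepthPartition_filter _ fun p hp => ?_
  by_cases hx : x ∈ p.1
  · rw [filter_false_of_mem fun S hS => not_not.2 (((mem_Icc.1 hS).1 : p.1 ⊆ S) hx)]
    exact hasDepthPartition_empty
  · have hIcc : (Icc p.1 p.2).filter (x ∉ ·) = Icc p.1 (p.2.erase x) := by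
      ext S
      simp only [mem_filter, mem_Icc, subset_erase]
      tauto
    rw [hIcc]
    refine (hasDepthPartition_Icc (subset_erase.2 ⟨P.le p hp, hx⟩)).mono ?_
    have := hP p hp
    have := pred_card_le_card_erase (a := x) (s := p.2)
    omega

-- Each interval `[A,B]` loses at most its bottom `A`, and `[A,B] \ {A}` is partitioned with
-- tops of size `> |A|`.
theorem IntervalPartition.hasDepthPartition_sdiff (P : IntervalPartition n Q)
    (hP : ∀ p ∈ P.pairs, c ≤ p.2.card) (R : Finset (Finset (Fin n)))
    (hR : ∀ p ∈ P.pairs, ∀ S ∈ R, S ∈ Icc p.1 p.2 → S = p.1 ∧ c ≤ S.card + 1) :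
    HasDepthPartition (Q \ R) c := by
  rw [sdiff_eq_filter]
  refine P.hasDepthPartition_filter _ fun p hp => ?_
  by_cases hR₁ : p.1 ∈ R
  · have hIcc : (Icc p.1 p.2).filter (· ∉ R) = (Icc p.1 p.2).erase p.1 := by
      ext S
      simp only [mem_filter, mem_erase]
      constructor
      · rintro ⟨hS, hSR⟩; exact ⟨fun h => hSR (h ▸ hR₁), hS⟩
      · rintro ⟨hS₁, hS⟩; exact ⟨hS, fun hSR => hS₁ (hR p hp S hSR hS).1⟩
    rw [hIcc]
    exact (hasDepthPartition_Icc_erase (P.le p hp)).mono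
      (hR p hp _ hR₁ (mem_Icc.2 ⟨subset_rfl, P.le p hp⟩)).2
  · rw [filter_true_of_mem (p := (· ∉ R)) fun S hS hSR => hR₁ ((hR p hp S hSR hS).1 ▸ hSR)]
    exact (hasDepthPartition_Icc (P.le p hp)).mono (hP p hp)

theorem erase_mem_Icc_iff {x : Fin n} (hA : x ∉ A) :
    S.erase x ∈ Icc A B ↔ S ∈ Icc A (insert x B) := by
  simp only [mem_Icc, subset_erase, subset_insert_iff, hA, not_false_eq_true,
    and_true]

-- Every interval `[A,B]` of a partition of the sets avoiding `x` is replaced by `[A, B ∪ {x}]`.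
theorem HasDepthPartition.cone (x : Fin n) (h : HasDepthPartition (Q.filter (x ∉ ·)) c) :
    HasDepthPartition (univ.filter fun S => S.erase x ∈ Q) (c + 1) := by
  obtain ⟨P, hP⟩ := h
  have hx : ∀ p ∈ P.pairs, x ∉ p.1 := fun p hp => (mem_filter.1 (P.fst_mem hp)).2
  have hQ : univ.filter (fun S => S.erase x ∈ Q) =
      P.pairs.biUnion fun p => Icc p.1 (insert x p.2) := by
    ext S
    have : S.erase x ∈ Q ↔ S.erase x ∈ Q.filter (x ∉ ·) := by simp
    simp only [mem_filter, mem_univ, true_and, mem_biUnion, this, P.mem_iff]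
    exact exists_congr fun p => and_congr_right fun hp => erase_mem_Icc_iff (hx p hp)
  rw [hQ]
  refine hasDepthPartition_biUnion_Icc (fun p hp => (P.le p hp).trans (subset_insert x _))
    (fun p hp q hq hpq => disjoint_left.2 fun S hSp hSq => ?_) fun p hp => ?_
  · exact disjoint_left.1 (P.disj p hp q hq hpq) ((erase_mem_Icc_iff (hx p hp)).2 hSp)
      ((erase_mem_Icc_iff (hx q hq)).2 hSq)
  · have hxp : x ∉ p.2 := (mem_filter.1 (P.snd_mem hp)).2
    rw [card_insert_of_notMem hxp]
    exact Nat.add_le_add_right (hP p hp) 1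

section Deletion

variable {m : ℕ} {x : Fin (m + 1)} {Q : Finset (Finset (Fin (m + 1)))} {c : ℕ}

-- `2^[m]` is identified with the subsets of `[m+1]` avoiding `x` through `x.succAboveEmb`.
def deletion (x : Fin (m + 1)) (Q : Finset (Finset (Fin (m + 1)))) : Finset (Finset (Fin m)) :=
  univ.filter fun T => T.map x.succAboveEmb ∈ Q

@[simp]
theorem mem_deletion {T : Finset (Fin m)} : T ∈ deletion x Q ↔ T.map x.succAboveEmb ∈ Q := by
  simp [deletion]

theorem notMem_map_succAboveEmb (T : Finset (Fin m)) : x ∉ T.map x.succAboveEmb := by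
  simp [Fin.succAbove_ne]

theorem exists_map_succAboveEmb_eq {S : Finset (Fin (m + 1))} (hS : x ∉ S) :
    ∃ T : Finset (Fin m), T.map x.succAboveEmb = S := by
  have : S ⊆ univ.map x.succAboveEmb := fun y hy => by
    obtain ⟨i, rfl⟩ := Fin.exists_succAbove_eq fun h : y = x => hS (h ▸ hy)
    simp
  obtain ⟨T, -, hT⟩ := subset_map_iff.1 this
  exact ⟨T, hT.symm⟩

theorem Icc_map_succAboveEmb (A B : Finset (Fin m)) :
    Icc (A.map x.succAboveEmb) (B.map x.succAboveEmb) = (Icc A B).image (·.map x.succAboveEmb) := by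
  ext S
  simp only [mem_image, mem_Icc]
  constructor
  · rintro ⟨hAS, hSB⟩
    obtain ⟨T, rfl⟩ := exists_map_succAboveEmb_eq fun hx => notMem_map_succAboveEmb B (hSB hx)
    exact ⟨T, ⟨map_subset_map.1 hAS, map_subset_map.1 hSB⟩, rfl⟩
  · rintro ⟨T, ⟨hAT, hTB⟩, rfl⟩
    exact ⟨map_subset_map.2 hAT, map_subset_map.2 hTB⟩

theorem map_succAboveEmb_mem_Icc {T A B : Finset (Fin m)} :
    T.map x.succAboveEmb ∈ Icc (A.map x.succAboveEmb) (B.map x.succAboveEmb) ↔ T ∈ Icc A B := by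
  simp only [mem_Icc, map_subset_map]

theorem image_deletion (Q : Finset (Finset (Fin (m + 1)))) :
    (deletion x Q).image (·.map x.succAboveEmb) = Q.filter (x ∉ ·) := by
  ext S
  simp only [mem_image, mem_deletion, mem_filter]
  constructor
  · rintro ⟨T, hT, rfl⟩
    exact ⟨hT, notMem_map_succAboveEmb T⟩
  · rintro ⟨hS, hxS⟩
    obtain ⟨T, rfl⟩ := exists_map_succAboveEmb_eq hxS
    exact ⟨T, hS, rfl⟩

theorem compl_deletion : univ \ deletion x Q = deletion x (univ \ Q) := by
  ext T
  simp

theorem IsDownSet.deletion (hQ : IsDownSet Q) : IsDownSet (deletion x Q) :=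
  fun _ hB _ hAB => mem_deletion.2 (hQ _ (mem_deletion.1 hB) _ (map_subset_map.2 hAB))

theorem HasDepthPartition.of_deletion (h : HasDepthPartition (deletion x Q) c) :
    HasDepthPartition (Q.filter (x ∉ ·)) c := by
  obtain ⟨P, hP⟩ := h
  rw [← image_deletion, ← P.biUnion_eq, biUnion_image]
  simp only [← Icc_map_succAboveEmb]
  refine hasDepthPartition_biUnion_Icc (fun p hp => map_subset_map.2 (P.le p hp))
    (fun p hp q hq hpq => ?_) fun p hp => by simpa using hP p hp
  simp only [Function.onFun, Icc_map_succAboveEmb, disjoint_image (map_injective _)]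
  exact P.disj p hp q hq hpq

theorem hasDepthPartition_deletion (h : HasDepthPartition (Q.filter (x ∉ ·)) c) :
    HasDepthPartition (deletion x Q) c := by
  obtain ⟨P, hP⟩ := h
  let g := Prod.map (fun T : Finset (Fin m) => T.map x.succAboveEmb)
    (fun T : Finset (Fin m) => T.map x.succAboveEmb)
  have hg : Function.Injective g := Prod.map_injective.2 ⟨map_injective _, map_injective _⟩
  have hrange : ∀ p ∈ P.pairs, ∃ p', g p' = p := fun p hp => by
    obtain ⟨A, hA⟩ := exists_map_succAboveEmb_eq (mem_filter.1 (P.fst_mem hp)).2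
    obtain ⟨B, hB⟩ := exists_map_succAboveEmb_eq (mem_filter.1 (P.snd_mem hp)).2
    exact ⟨(A, B), Prod.ext hA hB⟩
  have hdel : deletion x Q = (P.pairs.preimage g hg.injOn).biUnion fun p => Icc p.1 p.2 := by
    ext T
    have : T ∈ deletion x Q ↔ T.map x.succAboveEmb ∈ Q.filter (x ∉ ·) := by simp
    rw [this, P.mem_iff]
    simp only [mem_biUnion, mem_preimage]
    constructor
    · rintro ⟨p, hp, hTp⟩
      obtain ⟨p', rfl⟩ := hrange p hp
      exact ⟨p', hp, map_succAboveEmb_mem_Icc.1 hTp⟩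
    · rintro ⟨p', hp', hTp'⟩
      exact ⟨g p', hp', map_succAboveEmb_mem_Icc.2 hTp'⟩
  rw [hdel]
  refine hasDepthPartition_biUnion_Icc
    (fun p hp => map_subset_map.1 (P.le _ (mem_preimage.1 hp)))
    (fun p hp q hq hpq => ?_) fun p hp => by simpa [g] using hP _ (mem_preimage.1 hp)
  have := P.disj _ (mem_preimage.1 hp) _ (mem_preimage.1 hq) (hg.ne hpq)
  simpa only [g, Prod.map_fst, Prod.map_snd, Icc_map_succAboveEmb,
    disjoint_image (map_injective _)] using this

-- The sets containing `x` form the interval `[{x}, [m+1]]`, which lies in `U` when no set of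
-- `D` contains `x`.
theorem hasDepthPartition_compl_of_deletion {D : Finset (Finset (Fin (m + 1)))}
    (hx : ∀ S ∈ D, x ∉ S) (hc : c ≤ m + 1) (h : HasDepthPartition (deletion x (univ \ D)) c) :
    HasDepthPartition (univ \ D) c := by
  have hUx : (univ \ D).filter (x ∈ ·) = Icc {x} univ := by
    ext S
    simp only [mem_filter, mem_sdiff, mem_univ, true_and, mem_Icc, singleton_subset_iff,
      subset_univ, and_true]
    exact ⟨And.right, fun hxS => ⟨fun hS => hx S hS hxS, hxS⟩⟩
  rw [← filter_union_filter_not_eq (x ∈ ·) (univ \ D), hUx, union_comm]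
  refine h.of_deletion.union ((hasDepthPartition_Icc (subset_univ _)).mono (by simpa using hc)) ?_
  rw [← hUx]
  exact (disjoint_filter_filter_not _ _ _).symm

end Deletion

section Truncation

variable {D : Finset (Finset (Fin n))} {B G : Finset (Fin n)} {j : ℕ}

theorem IsDownSet.filter_card_le (hD : IsDownSet D) (k : ℕ) :
    IsDownSet (D.filter (·.card ≤ k)) := fun B hB A hAB =>
  mem_filter.2 ⟨hD B (mem_filter.1 hB).1 A hAB, (card_le_card hAB).trans (mem_filter.1 hB).2⟩

theorem maxElt_filter_card_le_of_card_eq (hG : G ∈ D) (hGk : G.card = k) :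
    MaxElt (D.filter (·.card ≤ k)) G :=
  ⟨mem_filter.2 ⟨hG, hGk.le⟩, fun _ hC hGC =>
    eq_of_subset_of_card_le hGC (hGk ▸ (mem_filter.1 hC).2)⟩

theorem IsDownSet.card_eq_of_maxElt_filter_card_le (hD : IsDownSet D)
    (hk : ∀ F, MaxElt D F → k ≤ F.card) (hB : MaxElt (D.filter (·.card ≤ k)) B) :
    B.card = k := by
  obtain ⟨hBD, hBk⟩ := mem_filter.1 hB.1
  obtain ⟨F, hF, hBF⟩ := exists_maxElt_superset hBD
  obtain ⟨G, hBG, hGF, hGk⟩ := exists_subsuperset_card_eq hBF hBk (hk F hF)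
  rw [hB.2 G (mem_filter.2 ⟨hD F hF.1 G hGF, hGk.le⟩) hBG, hGk]

-- The sets of `D` of size `j + 1` lying in an interval of a partition of `2^[n] \ D_{≤ j}`
-- can only be its bottom, since `D` is a down set.
theorem IsDownSet.hasDepthPartition_compl_filter_succ (hD : IsDownSet D) (hkj : k ≤ j)
    (h : HasDepthPartition (univ \ D.filter (·.card ≤ j)) (k + 1)) :
    HasDepthPartition (univ \ D.filter (·.card ≤ j + 1)) (k + 1) := by
  obtain ⟨P, hP⟩ := h
  have hsplit : univ \ D.filter (·.card ≤ j + 1) =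
      (univ \ D.filter (·.card ≤ j)) \ D.filter (·.card = j + 1) := by
    ext S
    by_cases hS : S ∈ D <;> simp [hS]
    omega
  rw [hsplit]
  refine P.hasDepthPartition_sdiff hP _ fun p hp S hS hSp => ?_
  obtain ⟨hSD, hScard⟩ := mem_filter.1 hS
  have hpS : p.1 ⊆ S := (mem_Icc.1 hSp).1
  have hp : j < p.1.card := by
    have := P.fst_mem hp
    simp only [mem_sdiff, mem_univ, true_and, mem_filter, not_and, not_le] at this
    exact this (hD S hSD _ hpS)
  exact ⟨(eq_of_subset_of_card_le hpS (by omega)).symm, by omega⟩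

theorem IsDownSet.hasDepthPartition_compl_of_filter_card_le (hD : IsDownSet D)
    (h : HasDepthPartition (univ \ D.filter (·.card ≤ k)) (k + 1)) :
    HasDepthPartition (univ \ D) (k + 1) := by
  have ladder : ∀ t, HasDepthPartition (univ \ D.filter (·.card ≤ k + t)) (k + 1) := by
    intro t
    induction t with
    | zero => exact h
    | succ t ih => exact hD.hasDepthPartition_compl_filter_succ (Nat.le_add_right k t) ih
  have hfull : D.filter (·.card ≤ k + n) = D :=
    filter_true_of_mem fun S _ => (card_le_univ S).trans (by simp)
  simpa [hfull] using ladder n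

theorem IsDownSet.sdepth_compl_filter_card_le (hD : IsDownSet D) (hU : (univ \ D).Nonempty)
    (hk : sdepth (univ \ D) ≤ k) : sdepth (univ \ D.filter (·.card ≤ k)) ≤ k := by
  have hU' : (univ \ D.filter (·.card ≤ k)).Nonempty :=
    hU.mono (sdiff_subset_sdiff subset_rfl (filter_subset _ _))
  by_contra! h
  have := (le_sdepth_iff hU).2
    (hD.hasDepthPartition_compl_of_filter_card_le ((le_sdepth_iff hU').1 h))
  omega

theorem IsDownSet.exists_maxElt_filter_card_le_notMem (hD : IsDownSet D)
    (hk : ∀ F, MaxElt D F → k ≤ F.card) {x : Fin n} (hS : S ∈ D) (hxS : insert x S ∉ D) :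
    ∃ G, MaxElt (D.filter (·.card ≤ k)) G ∧ x ∉ G := by
  obtain ⟨F, hF, hSF⟩ := exists_maxElt_superset hS
  have hxF : x ∉ F := fun hxF => hxS (hD F hF.1 _ (insert_subset hxF hSF))
  obtain ⟨G, hGF, hG⟩ := exists_subset_card_eq (hk F hF)
  exact ⟨G, maxElt_filter_card_le_of_card_eq (hD F hF.1 G hGF) hG, fun hxG => hxF (hGF hxG)⟩

end Truncation

-- A counterexample to `sdepth I ≥ sdepth (S/I) + 1`, with `D` the Stanley–Reisner complex of `I`.
structure IsCounterexample (D : Finset (Finset (Fin n))) : Prop where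
  isDownSet : IsDownSet D
  empty_mem : ∅ ∈ D
  compl_nonempty : (univ \ D).Nonempty
  sdepth_compl_le : sdepth (univ \ D) ≤ sdepth D

structure IsReducedCounterexample (D : Finset (Finset (Fin n))) : Prop
    extends IsCounterexample D where
  card_eq_sdepth_of_maxElt : ∀ B, MaxElt D B → B.card = sdepth D
  exists_maxElt_mem : ∀ x, ∃ B, MaxElt D B ∧ x ∈ B
  exists_maxElt_notMem : ∀ x, ∃ B, MaxElt D B ∧ x ∉ B

section Reduction

variable {m : ℕ} {x : Fin (m + 1)} {D : Finset (Finset (Fin (m + 1)))}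

theorem IsCounterexample.deletion_of_forall_notMem (hD : IsCounterexample D)
    (hx : ∀ S ∈ D, x ∉ S) : IsCounterexample (deletion x D) := by
  have hDne : D.Nonempty := ⟨∅, hD.empty_mem⟩
  have hU := hD.compl_nonempty
  have hsD : sdepth D ≤ sdepth (deletion x D) := by
    refine (le_sdepth_iff ⟨∅, by simpa using hD.empty_mem⟩).2 (hasDepthPartition_deletion ?_)
    rw [filter_true_of_mem hx]
    exact hasDepthPartition_sdepth hDne
  have hDm : sdepth D ≤ m := sdepth_le_of_forall_card_le hDne fun S hS =>
    Nat.lt_succ_iff.1 ((card_lt_univ_of_notMem (hx S hS)).trans_eq (Fintype.card_fin _))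
  have hU₀ : (univ \ deletion x D).Nonempty := by
    rw [compl_deletion]
    by_contra hU₀
    rw [not_nonempty_iff_eq_empty] at hU₀
    have := (le_sdepth_iff hU).2
      (hasDepthPartition_compl_of_deletion hx le_rfl (hU₀ ▸ hasDepthPartition_empty))
    have := hD.sdepth_compl_le
    omega
  refine ⟨hD.isDownSet.deletion, by simpa using hD.empty_mem, hU₀, ?_⟩
  have hU₀m : sdepth (univ \ deletion x D) ≤ m + 1 :=
    sdepth_le_of_forall_card_le hU₀ fun S _ => (card_le_univ S).trans (by simp)
  calc sdepth (univ \ deletion x D) ≤ sdepth (univ \ D) := by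
        refine (le_sdepth_iff hU).2 (hasDepthPartition_compl_of_deletion hx hU₀m ?_)
        rw [← compl_deletion]
        exact hasDepthPartition_sdepth hU₀
    _ ≤ sdepth D := hD.sdepth_compl_le
    _ ≤ sdepth (deletion x D) := hsD

theorem IsCounterexample.deletion_of_forall_insert_mem (hD : IsCounterexample D)
    (hx : ∀ S ∈ D, insert x S ∈ D) : IsCounterexample (deletion x D) := by
  have hDne : D.Nonempty := ⟨∅, hD.empty_mem⟩
  have hU := hD.compl_nonempty
  have hcone : univ \ D = univ.filter fun S => S.erase x ∈ univ \ D := by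
    ext S
    simp only [mem_sdiff, mem_univ, true_and, mem_filter, not_iff_not]
    exact ⟨fun hS => hD.isDownSet S hS _ (erase_subset x S),
      fun hS => hD.isDownSet _ (hx _ hS) S (subset_insert_iff.2 subset_rfl)⟩
  have hsD : sdepth D ≤ sdepth (deletion x D) + 1 := by
    have : HasDepthPartition (deletion x D) (sdepth D - 1) :=
      hasDepthPartition_deletion ((hasDepthPartition_sdepth hDne).filter_notMem x)
    have := (le_sdepth_iff ⟨∅, by simpa using hD.empty_mem⟩).2 this
    omega
  have hU₀ : (univ \ deletion x D).Nonempty := by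
    obtain ⟨S, hS⟩ := hU
    rw [hcone, mem_filter] at hS
    have : S.erase x ∈ (deletion x (univ \ D)).image (·.map x.succAboveEmb) := by
      rw [image_deletion]
      exact mem_filter.2 ⟨hS.2, notMem_erase x S⟩
    rw [compl_deletion]
    exact image_nonempty.1 ⟨_, this⟩
  have hsU : sdepth (univ \ deletion x D) + 1 ≤ sdepth (univ \ D) := by
    refine (le_sdepth_iff hU).2 ?_
    rw [hcone]
    refine HasDepthPartition.cone x (HasDepthPartition.of_deletion ?_)
    rw [← compl_deletion]
    exact hasDepthPartition_sdepth hU₀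
  refine ⟨hD.isDownSet.deletion, by simpa using hD.empty_mem, hU₀, ?_⟩
  have := hD.sdepth_compl_le
  omega

end Reduction

theorem IsCounterexample.truncate {D : Finset (Finset (Fin n))} (hD : IsCounterexample D)
    (hcover : ∀ x, ∃ S ∈ D, x ∈ S) (hcone : ∀ x, ∃ S ∈ D, insert x S ∉ D) :
    IsReducedCounterexample (D.filter (·.card ≤ sdepth D)) := by
  set k := sdepth D
  have hk : ∀ F, MaxElt D F → k ≤ F.card := fun _ => sdepth_le_card_of_maxElt
  have hk₁ : 1 ≤ k :=
    (one_le_sdepth hD.compl_nonempty (by simp [hD.empty_mem])).trans hD.sdepth_compl_le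
  have h0 : ∅ ∈ D.filter (·.card ≤ k) := mem_filter.2 ⟨hD.empty_mem, by simp⟩
  have hmax : ∀ B, MaxElt (D.filter (·.card ≤ k)) B → B.card = k := fun _ hB =>
    hD.isDownSet.card_eq_of_maxElt_filter_card_le hk hB
  have hsD : sdepth (D.filter (·.card ≤ k)) = k := by
    obtain ⟨F, hF, -⟩ := exists_maxElt_superset h0
    exact le_antisymm ((sdepth_le_card_of_maxElt hF).trans (hmax F hF).le)
      ((le_sdepth_iff ⟨∅, h0⟩).2 (hasDepthPartition_sdepth ⟨∅, hD.empty_mem⟩).filter_card_le)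
  refine ⟨⟨hD.isDownSet.filter_card_le k, h0,
      hD.compl_nonempty.mono (sdiff_subset_sdiff subset_rfl (filter_subset _ _)), ?_⟩,
    hsD.symm ▸ hmax, fun x => ?_, fun x => ?_⟩
  · rw [hsD]
    exact hD.isDownSet.sdepth_compl_filter_card_le hD.compl_nonempty hD.sdepth_compl_le
  · obtain ⟨S, hS, hxS⟩ := hcover x
    have hx : {x} ∈ D.filter (·.card ≤ k) :=
      mem_filter.2 ⟨hD.isDownSet S hS _ (singleton_subset_iff.2 hxS), by simpa using hk₁⟩
    obtain ⟨F, hF, hxF⟩ := exists_maxElt_superset hx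
    exact ⟨F, hF, hxF (mem_singleton_self x)⟩
  · obtain ⟨S, hS, hxS⟩ := hcone x
    exact hD.isDownSet.exists_maxElt_filter_card_le_notMem hk hS hxS

theorem IsCounterexample.exists_reduced : ∀ {n : ℕ} {D : Finset (Finset (Fin n))},
    IsCounterexample D → ∃ n' ≤ n, ∃ D' : Finset (Finset (Fin n')), IsReducedCounterexample D'
  | 0, _, hD => ⟨0, le_rfl, _, hD.truncate (fun x => x.elim0) (fun x => x.elim0)⟩
  | m + 1, D, hD => by
    by_cases hunused : ∃ x, ∀ S ∈ D, x ∉ S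
    · obtain ⟨x, hx⟩ := hunused
      obtain ⟨n', hn', D', hD'⟩ := (hD.deletion_of_forall_notMem hx).exists_reduced
      exact ⟨n', by omega, D', hD'⟩
    by_cases hcone : ∃ x, ∀ S ∈ D, insert x S ∈ D
    · obtain ⟨x, hx⟩ := hcone
      obtain ⟨n', hn', D', hD'⟩ := (hD.deletion_of_forall_insert_mem hx).exists_reduced
      exact ⟨n', by omega, D', hD'⟩
    push Not at hunused hcone
    exact ⟨m + 1, le_rfl, _, hD.truncate hunused hcone⟩

end

theorem minimal_counterexample_reduction_general
    (n : ℕ) (D : Finset (Finset (Fin n))) (hD : IsDownSet D)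
    (h0 : ∅ ∈ D) (hU : ((Finset.univ : Finset (Finset (Fin n))) \ D).Nonempty)
    (hle : sdepth ((Finset.univ : Finset (Finset (Fin n))) \ D) ≤ sdepth D) :
    ∃ (n' : ℕ), n' ≤ n ∧ ∃ D' : Finset (Finset (Fin n')),
      IsDownSet D' ∧ ∅ ∈ D' ∧
      ((Finset.univ : Finset (Finset (Fin n'))) \ D').Nonempty ∧
      sdepth ((Finset.univ : Finset (Finset (Fin n'))) \ D') ≤ sdepth D' ∧
      (∀ B, MaxElt D' B → B.card = sdepth D') ∧
      (∀ x : Fin n', ∃ B, MaxElt D' B ∧ x ∈ B) ∧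
      (∀ x : Fin n', ∃ B, MaxElt D' B ∧ x ∉ B) := by
  obtain ⟨n', hn', D', hD'⟩ := IsCounterexample.exists_reduced ⟨hD, h0, hU, hle⟩
  exact ⟨n', hn', D', hD'.isDownSet, hD'.empty_mem, hD'.compl_nonempty, hD'.sdepth_compl_le,
    hD'.card_eq_sdepth_of_maxElt, hD'.exists_maxElt_mem, hD'.exists_maxElt_notMem⟩

/-- If some down set `D ⊆ 2^[n]` with `∅ ∈ D` and nonempty complement `U` satisfies
`sdepth(U) ≤ sdepth(D)`, then there is `n' ≤ n` and a down set `D' ⊆ 2^[n']` with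
`∅ ∈ D'`, nonempty complement `U'`, `sdepth(U') ≤ sdepth(D')`, such that (with
`k = sdepth(D')`): every maximal element of `D'` has exactly `k` elements, the union
of the maximal elements of `D'` is `[n']`, and their intersection is empty. -/
theorem minimal_counterexample_reduction
    (n : ℕ) (hn : 1 ≤ n) (D : Finset (Finset (Fin n))) (hD : IsDownSet D)
    (h0 : ∅ ∈ D) (hU : ((Finset.univ : Finset (Finset (Fin n))) \ D).Nonempty)
    (hle : sdepth ((Finset.univ : Finset (Finset (Fin n))) \ D) ≤ sdepth D) :
    ∃ (n' : ℕ), n' ≤ n ∧ ∃ D' : Finset (Finset (Fin n')),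
      IsDownSet D' ∧ ∅ ∈ D' ∧
      ((Finset.univ : Finset (Finset (Fin n'))) \ D').Nonempty ∧
      sdepth ((Finset.univ : Finset (Finset (Fin n'))) \ D') ≤ sdepth D' ∧
      (∀ B, MaxElt D' B → B.card = sdepth D') ∧
      (∀ x : Fin n', ∃ B, MaxElt D' B ∧ x ∈ B) ∧
      (∀ x : Fin n', ∃ B, MaxElt D' B ∧ x ∉ B) :=
  minimal_counterexample_reduction_general n D hD h0 hU hle
end

section
/- Let n ≥ 2 and let D ⊆ 2^[n] be a down set with ∅ ∈ D such that every maximal element of D has exactly n−1 elements. Then sdepth(2^[n] \ D) > sdepth(D). (Combinatorially: if all facets of the Stanley–Reisner complex of a squarefree monomial ideal I have size n−1, then sdepth I > sdepth S/I.) -/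
/-!
If every facet of the down set `D` has size `n - 1`, each facet is `{i}ᶜ` for some `i`, so a set
lies outside `D` exactly when it contains every such `i`: the complement of `D` is a single
interval `[S, [n]]`, whose Stanley depth is `n`. On the other hand `[n] ∉ D`, so every interval
of a partition of `D` has top of size at most `n - 1`.
-/

open Finset

section

variable {n : ℕ}

namespace IntervalPartition

def ofIcc {A B : Finset (Fin n)} (h : A ⊆ B) : IntervalPartition n (Icc A B) where
  pairs := {(A, B)}
  le p hp := by rw [mem_singleton.1 hp]; exact h
  sub p hp := by rw [mem_singleton.1 hp]
  disj p hp q hq hne := absurd ((mem_singleton.1 hp).trans (mem_singleton.1 hq).symm) hne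
  covers _ hC := ⟨(A, B), mem_singleton_self _, hC⟩

end IntervalPartition

theorem sdepth_le_of_mem {Q : Finset (Finset (Fin n))} {C : Finset (Fin n)} {m : ℕ} (hC : C ∈ Q)
    (h : ∀ B ∈ Q, C ⊆ B → B.card ≤ m) : sdepth Q ≤ m := by
  refine csSup_le' ?_
  rintro k ⟨P, hP⟩
  obtain ⟨p, hp, hCp⟩ := P.covers C hC
  exact (hP p hp).trans <| h p.2 (P.sub p hp (mem_Icc.2 ⟨P.le p hp, le_rfl⟩)) (mem_Icc.1 hCp).2

theorem le_sdepth {Q : Finset (Finset (Fin n))} (hQ : Q.Nonempty) (P : IntervalPartition n Q)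
    {k : ℕ} (hk : ∀ p ∈ P.pairs, k ≤ p.2.card) : k ≤ sdepth Q := by
  have hbdd : BddAbove {k | ∃ P : IntervalPartition n Q, ∀ p ∈ P.pairs, k ≤ p.2.card} := by
    obtain ⟨C, hC⟩ := hQ
    refine ⟨n, ?_⟩
    rintro j ⟨P', hP'⟩
    obtain ⟨p, hp, -⟩ := P'.covers C hC
    simpa using (hP' p hp).trans (card_le_univ p.2)
  exact le_csSup hbdd ⟨P, hk⟩

theorem card_le_sdepth_Icc {A B : Finset (Fin n)} (h : A ⊆ B) : B.card ≤ sdepth (Icc A B) :=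
  le_sdepth ⟨A, mem_Icc.2 ⟨le_rfl, h⟩⟩ (IntervalPartition.ofIcc h) fun p hp => by
    rw [mem_singleton.1 hp]

theorem exists_maxElt_superset_s3 {D : Finset (Finset (Fin n))} {C : Finset (Fin n)} (hC : C ∈ D) :
    ∃ B, MaxElt D B ∧ C ⊆ B := by
  obtain ⟨B, hCB, hB, hBmax⟩ := D.exists_le_maximal hC
  exact ⟨B, ⟨hB, fun B' hB' hBB' => le_antisymm hBB' (hBmax hB' hBB')⟩, hCB⟩

theorem exists_eq_compl_singleton_of_card_eq_pred (hn : 0 < n) {B : Finset (Fin n)}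
    (hB : B.card = n - 1) : ∃ i, B = {i}ᶜ := by
  have : Bᶜ.card = 1 := by rw [card_compl, Fintype.card_fin, hB]; omega
  obtain ⟨i, hi⟩ := card_eq_one.1 this
  exact ⟨i, by rw [← hi, compl_compl]⟩

theorem univ_sdiff_eq_Icc_of_facets_card_pred (hn : 0 < n) {D : Finset (Finset (Fin n))}
    (hD : IsDownSet D) (hmax : ∀ B, MaxElt D B → B.card = n - 1) :
    univ \ D = Icc ({i | {i}ᶜ ∈ D} : Finset (Fin n)) univ := by
  ext C
  simp only [mem_sdiff, mem_univ, true_and, mem_Icc, subset_univ, and_true]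
  constructor
  · intro hC i hi
    by_contra hiC
    exact hC (hD _ (mem_filter.1 hi).2 C (subset_compl_singleton.2 hiC))
  · intro hSC hC
    obtain ⟨B, hBmax, hCB⟩ := exists_maxElt_superset_s3 hC
    obtain ⟨i, rfl⟩ := exists_eq_compl_singleton_of_card_eq_pred hn (hmax B hBmax)
    have hiC : i ∈ C := hSC (mem_filter.2 ⟨mem_univ i, hBmax.1⟩)
    simpa using hCB hiC

end

/-- If every maximal element of the down set `D ⊆ 2^[n]` has exactly `n-1` elements,
then `sdepth(2^[n] \ D) > sdepth(D)`. -/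
theorem sdepth_gt_of_facets_card_pred
    (n : ℕ) (hn : 2 ≤ n) (D : Finset (Finset (Fin n))) (hD : IsDownSet D)
    (h0 : ∅ ∈ D) (hmax : ∀ B, MaxElt D B → B.card = n - 1) :
    sdepth D < sdepth ((Finset.univ : Finset (Finset (Fin n))) \ D) := by
  have hcompl := univ_sdiff_eq_Icc_of_facets_card_pred (by omega) hD hmax
  have huniv : (univ : Finset (Fin n)) ∉ D := fun h =>
    (mem_sdiff.1 (hcompl ▸ mem_Icc.2 ⟨subset_univ _, le_rfl⟩ : univ ∈ univ \ D)).2 h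
  have hlower : n ≤ sdepth ((univ : Finset (Finset (Fin n))) \ D) := by
    simpa [hcompl] using card_le_sdepth_Icc (subset_univ ({i | {i}ᶜ ∈ D} : Finset (Fin n)))
  have hupper : sdepth D ≤ n - 1 := sdepth_le_of_mem h0 fun B hB _ => by
    have := card_lt_card (ssubset_univ_iff.2 fun h => huniv (h ▸ hB))
    rw [card_univ, Fintype.card_fin] at this
    omega
  omega
end

section
/- Let D ⊆ 2^[n] be a down set with ∅ ∈ D and U = 2^[n] \ D nonempty, let k = sdepth(D), and suppose sdepth(U) ≤ k. Let X be a maximal element of D of maximum cardinality, and suppose |X| ≥ k+1. Then sdepth(D \ {X}) ≥ k and sdepth(U ∪ {X}) ≤ k. (This is the step in the minimal-counterexample reduction that moves a too-large facet X from P_{S/I} to P_I while preserving the inequality sdepth I ≤ sdepth S/I.) -/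
open Finset

/-!
Order `[n]` linearly. For `A ⊆ B`, the intervals
`[A ∪ {y ∈ B \ A | y < x}, B \ {x}]`, `x ∈ B \ A`, partition `[A, B] \ {B}` (the one indexed by
`x` collects the `C` with `x = min (B \ C)`), and dually the intervals
`[A ∪ {x}, B \ {y ∈ B \ A | y < x}]` partition `[A, B] \ {A}` (indexed by `min (C \ A)`).

In an optimal partition of `D` the interval through the facet `X` is some `[A, X]`; replacing it
by the first splitting gives a partition of `D \ {X}` whose new intervals have tops of size
`|X| - 1 ≥ k`. In a partition of `U ∪ {X}` the interval through `X` is some `[X, B]`, since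
everything below `X` lies in `D`; replacing it by the second splitting gives a partition of `U`
whose new tops strictly contain `X`. So `sdepth (U ∪ {X}) > k` would force
`sdepth U ≥ min (sdepth (U ∪ {X})) (|X| + 1) > k`.
-/

namespace IntervalPartition

variable {n : ℕ}

def singletons (Q : Finset (Finset (Fin n))) : IntervalPartition n Q where
  pairs := Q.image fun C => (C, C)
  le := by
    simp only [mem_image]
    rintro _ ⟨C, -, rfl⟩
    exact Subset.rfl
  sub := by
    simp only [mem_image]
    rintro _ ⟨C, hC, rfl⟩
    simpa using hC
  disj := by
    simp only [mem_image]
    rintro _ ⟨C, -, rfl⟩ _ ⟨C', -, rfl⟩ hne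
    simpa using fun h : C = C' => hne (h ▸ rfl)
  covers C hC := ⟨(C, C), mem_image_of_mem _ hC, by simp⟩

theorem exists_of_isLeast {ι : Type*} [PartialOrder ι] {Q : Finset (Finset (Fin n))}
    (s : Finset ι) (f : ι → Finset (Fin n) × Finset (Fin n)) (S : Finset (Fin n) → Set ι)
    (hle : ∀ x ∈ s, (f x).1 ⊆ (f x).2)
    (hmem : ∀ x ∈ s, ∀ C, C ∈ Icc (f x).1 (f x).2 ↔ C ∈ Q ∧ IsLeast (S C) x)
    (hcov : ∀ C ∈ Q, ∃ x ∈ s, IsLeast (S C) x) :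
    ∃ R : IntervalPartition n Q, ∀ p ∈ R.pairs, ∃ x ∈ s, p = f x := by
  refine ⟨⟨s.image f, ?_, ?_, ?_, ?_⟩, fun p hp => by simpa [eq_comm] using hp⟩
  · simp only [mem_image]
    rintro _ ⟨x, hx, rfl⟩
    exact hle x hx
  · simp only [mem_image]
    rintro _ ⟨x, hx, rfl⟩ C hC
    exact ((hmem x hx C).1 hC).1
  · simp only [mem_image]
    rintro _ ⟨x, hx, rfl⟩ _ ⟨y, hy, rfl⟩ hne
    refine disjoint_left.2 fun C hCx hCy => hne ?_
    rw [((hmem x hx C).1 hCx).2.unique ((hmem y hy C).1 hCy).2]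
  · intro C hC
    obtain ⟨x, hx, hleast⟩ := hcov C hC
    exact ⟨f x, mem_image_of_mem f hx, (hmem x hx C).2 ⟨hC, hleast⟩⟩

theorem exists_erase {Q : Finset (Finset (Fin n))} (P : IntervalPartition n Q)
    {p : Finset (Fin n) × Finset (Fin n)} (hp : p ∈ P.pairs) {t : Finset (Fin n)}
    (ht : t ∈ Icc p.1 p.2) (R : IntervalPartition n ((Icc p.1 p.2).erase t)) :
    ∃ P' : IntervalPartition n (Q.erase t), P'.pairs ⊆ P.pairs ∪ R.pairs := by
  have hR : ∀ r ∈ R.pairs, Icc r.1 r.2 ⊆ Icc p.1 p.2 :=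
    fun r hr _ hC => (mem_erase.1 (R.sub r hr hC)).2
  have hfar : ∀ q ∈ P.pairs, q ≠ p → Disjoint (Icc q.1 q.2) (Icc p.1 p.2) :=
    fun q hq hne => P.disj q hq p hp hne
  refine ⟨⟨P.pairs.erase p ∪ R.pairs, ?_, ?_, ?_, ?_⟩, ?_⟩
  · simp only [mem_union, mem_erase]
    rintro q (⟨-, hq⟩ | hq)
    exacts [P.le q hq, R.le q hq]
  · simp only [mem_union, mem_erase]
    rintro q (⟨hne, hq⟩ | hq) C hC
    · refine mem_erase.2 ⟨?_, P.sub q hq hC⟩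
      rintro rfl
      exact disjoint_left.1 (hfar q hq hne) hC ht
    · exact mem_erase.2 ⟨(mem_erase.1 (R.sub q hq hC)).1, P.sub p hp (hR q hq hC)⟩
  · simp only [mem_union, mem_erase]
    rintro q (⟨hq', hq⟩ | hq) r (⟨hr', hr⟩ | hr) hne
    · exact P.disj q hq r hr hne
    · exact (hfar q hq hq').mono_right (hR r hr)
    · exact ((hfar r hr hr').mono_right (hR q hq)).symm
    · exact R.disj q hq r hr hne
  · intro C hC
    obtain ⟨hCt, hCQ⟩ := mem_erase.1 hC
    obtain ⟨q, hq, hCq⟩ := P.covers C hCQ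
    by_cases hqp : q = p
    · subst hqp
      obtain ⟨r, hr, hCr⟩ := R.covers C (mem_erase.2 ⟨hCt, hCq⟩)
      exact ⟨r, mem_union_right _ hr, hCr⟩
    · exact ⟨q, mem_union_left _ (mem_erase.2 ⟨hqp, hq⟩), hCq⟩
  · exact union_subset_union (erase_subset p P.pairs) Subset.rfl

end IntervalPartition

section IntervalSplitting

variable {n : ℕ} {A B C : Finset (Fin n)} {x : Fin n}

theorem mem_Icc_union_filter_lt_erase_iff (hx : x ∈ B) :
    C ∈ Icc (A ∪ (B \ A).filter (· < x)) (B.erase x) ↔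
      C ∈ (Icc A B).erase B ∧ IsLeast (↑(B \ C) : Set (Fin n)) x := by
  simp only [mem_Icc, mem_erase, IsLeast, mem_lowerBounds, coe_sdiff, Set.mem_sdiff, mem_coe,
    subset_iff, mem_union, mem_filter, mem_sdiff]
  grind

theorem mem_Icc_insert_sdiff_filter_lt_iff (hx : x ∉ A) :
    C ∈ Icc (insert x A) (B \ (B \ A).filter (· < x)) ↔
      C ∈ (Icc A B).erase A ∧ IsLeast (↑(C \ A) : Set (Fin n)) x := by
  simp only [mem_Icc, mem_erase, IsLeast, mem_lowerBounds, coe_sdiff, Set.mem_sdiff, mem_coe,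
    subset_iff, mem_insert, mem_filter, mem_sdiff]
  grind

theorem exists_intervalPartition_Icc_erase_right (hAB : A ⊆ B) :
    ∃ R : IntervalPartition n ((Icc A B).erase B), ∀ p ∈ R.pairs, B.card ≤ p.2.card + 1 := by
  have hle : ∀ x ∈ B \ A, A ∪ (B \ A).filter (· < x) ⊆ B.erase x := fun x hx => by
    simp only [subset_iff, mem_union, mem_filter, mem_sdiff, mem_erase] at hx hAB ⊢
    grind
  obtain ⟨R, hR⟩ := IntervalPartition.exists_of_isLeast (B \ A)
    (fun x => (A ∪ (B \ A).filter (· < x), B.erase x)) (fun C => ↑(B \ C)) hle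
    (fun x hx C => mem_Icc_union_filter_lt_erase_iff (mem_sdiff.1 hx).1)
    (fun C hC => by
      obtain ⟨hCne, hAC, hCB⟩ := by simpa only [mem_erase, mem_Icc] using hC
      have hne : (B \ C).Nonempty := sdiff_nonempty.2 fun h => hCne (Subset.antisymm hCB h)
      exact ⟨_, sdiff_subset_sdiff Subset.rfl hAC (min'_mem _ hne), isLeast_min' _ hne⟩)
  refine ⟨R, fun p hp => ?_⟩
  obtain ⟨x, hx, rfl⟩ := hR p hp
  rw [card_erase_add_one (mem_sdiff.1 hx).1]

theorem exists_intervalPartition_Icc_erase_left (hAB : A ⊆ B) :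
    ∃ R : IntervalPartition n ((Icc A B).erase A), ∀ p ∈ R.pairs, A.card < p.2.card := by
  have hle : ∀ x ∈ B \ A, insert x A ⊆ B \ (B \ A).filter (· < x) := fun x hx => by
    simp only [subset_iff, mem_insert, mem_filter, mem_sdiff] at hx ⊢
    grind
  obtain ⟨R, hR⟩ := IntervalPartition.exists_of_isLeast (B \ A)
    (fun x => (insert x A, B \ (B \ A).filter (· < x))) (fun C => ↑(C \ A)) hle
    (fun x hx C => mem_Icc_insert_sdiff_filter_lt_iff (mem_sdiff.1 hx).2)
    (fun C hC => by
      obtain ⟨hCne, hAC, hCB⟩ := by simpa only [mem_erase, mem_Icc] using hC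
      have hne : (C \ A).Nonempty := sdiff_nonempty.2 fun h => hCne (Subset.antisymm h hAC)
      exact ⟨_, sdiff_subset_sdiff hCB Subset.rfl (min'_mem _ hne), isLeast_min' _ hne⟩)
  refine ⟨R, fun p hp => ?_⟩
  obtain ⟨x, hx, rfl⟩ := hR p hp
  exact (card_lt_card (ssubset_insert (mem_sdiff.1 hx).2)).trans_le (card_le_card (hle x hx))

end IntervalSplitting

section Sdepth

variable {n : ℕ} {Q : Finset (Finset (Fin n))}

theorem bddAbove_sdepth_set (hQ : Q.Nonempty) :
    BddAbove {k | ∃ P : IntervalPartition n Q, ∀ p ∈ P.pairs, k ≤ p.2.card} := by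
  refine ⟨n, fun k ⟨P, hP⟩ => ?_⟩
  obtain ⟨C, hC⟩ := hQ
  obtain ⟨p, hp, -⟩ := P.covers C hC
  simpa using (hP p hp).trans (card_le_univ p.2)

theorem exists_intervalPartition_sdepth_le_card (hQ : Q.Nonempty) :
    ∃ P : IntervalPartition n Q, ∀ p ∈ P.pairs, sdepth Q ≤ p.2.card :=
  Nat.sSup_mem (s := {k | ∃ P : IntervalPartition n Q, ∀ p ∈ P.pairs, k ≤ p.2.card})
    ⟨0, IntervalPartition.singletons Q, fun _ _ => Nat.zero_le _⟩ (bddAbove_sdepth_set hQ)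

theorem le_sdepth_of_intervalPartition (hQ : Q.Nonempty) {k : ℕ} (P : IntervalPartition n Q)
    (hP : ∀ p ∈ P.pairs, k ≤ p.2.card) : k ≤ sdepth Q :=
  le_csSup (bddAbove_sdepth_set hQ) ⟨P, hP⟩

theorem min_sdepth_le_sdepth_erase {t : Finset (Fin n)} {m : ℕ} (ht : t ∈ Q)
    (hQt : (Q.erase t).Nonempty)
    (hsplit : ∀ A B, A ⊆ B → Icc A B ⊆ Q → t ∈ Icc A B →
      ∃ R : IntervalPartition n ((Icc A B).erase t), ∀ p ∈ R.pairs, m ≤ p.2.card) :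
    min (sdepth Q) m ≤ sdepth (Q.erase t) := by
  obtain ⟨P, hP⟩ := exists_intervalPartition_sdepth_le_card ⟨t, ht⟩
  obtain ⟨p, hp, htp⟩ := P.covers t ht
  obtain ⟨R, hR⟩ := hsplit p.1 p.2 (P.le p hp) (P.sub p hp) htp
  obtain ⟨P', hP'⟩ := P.exists_erase hp htp R
  refine le_sdepth_of_intervalPartition hQt P' fun q hq => ?_
  rcases mem_union.1 (hP' hq) with hq | hq
  exacts [min_le_left _ _ |>.trans (hP q hq), min_le_right _ _ |>.trans (hR q hq)]

theorem min_sdepth_sub_one_le_sdepth_erase {t : Finset (Fin n)} (ht : MaxElt Q t)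
    (hQt : (Q.erase t).Nonempty) : min (sdepth Q) (t.card - 1) ≤ sdepth (Q.erase t) := by
  refine min_sdepth_le_sdepth_erase ht.1 hQt fun A B hAB hABQ htAB => ?_
  obtain rfl : t = B := ht.2 B (hABQ (right_mem_Icc.2 hAB)) (mem_Icc.1 htAB).2
  obtain ⟨R, hR⟩ := exists_intervalPartition_Icc_erase_right hAB
  exact ⟨R, fun p hp => by have := hR p hp; omega⟩

theorem min_sdepth_add_one_le_sdepth_erase {t : Finset (Fin n)} (ht : t ∈ Q)
    (hmin : ∀ C ∈ Q, C ⊆ t → C = t) (hQt : (Q.erase t).Nonempty) :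
    min (sdepth Q) (t.card + 1) ≤ sdepth (Q.erase t) := by
  refine min_sdepth_le_sdepth_erase ht hQt fun A B hAB hABQ htAB => ?_
  obtain rfl : A = t := hmin A (hABQ (left_mem_Icc.2 hAB)) (mem_Icc.1 htAB).1
  exact exists_intervalPartition_Icc_erase_left hAB

end Sdepth

theorem move_large_facet_general
    (n : ℕ) (D : Finset (Finset (Fin n))) (hD : IsDownSet D)
    (hUne : ((Finset.univ : Finset (Finset (Fin n))) \ D).Nonempty)
    (hle : sdepth ((Finset.univ : Finset (Finset (Fin n))) \ D) ≤ sdepth D)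
    (X : Finset (Fin n)) (hX : MaxElt D X)
    (hXcard : sdepth D + 1 ≤ X.card) :
    sdepth D ≤ sdepth (D.erase X) ∧
      sdepth (insert X ((Finset.univ : Finset (Finset (Fin n))) \ D)) ≤ sdepth D := by
  set U := (Finset.univ : Finset (Finset (Fin n))) \ D
  have hXU : X ∉ U := fun h => (mem_sdiff.1 h).2 hX.1
  constructor
  · have hXne : X.Nonempty := card_pos.1 (by omega)
    have := min_sdepth_sub_one_le_sdepth_erase hX
      ⟨∅, mem_erase.2 ⟨hXne.ne_empty.symm, hD X hX.1 ∅ (empty_subset X)⟩⟩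
    omega
  · have hmin : ∀ C ∈ insert X U, C ⊆ X → C = X := by
      rintro C hC hCX
      rcases mem_insert.1 hC with rfl | hCU
      exacts [rfl, absurd (hD X hX.1 C hCX) (mem_sdiff.1 hCU).2]
    have := min_sdepth_add_one_le_sdepth_erase (mem_insert_self X U) hmin
      (by rwa [erase_insert hXU])
    rw [erase_insert hXU] at this
    omega

/-- Moving a maximal element `X` of maximum cardinality `|X| ≥ k+1` from the down
set `D` (with `k = sdepth D ≥ sdepth U`, `U = 2^[n] \ D`) to `U` preserves the
inequality: `sdepth(D \ {X}) ≥ k` and `sdepth(U ∪ {X}) ≤ k`. -/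
theorem move_large_facet
    (n : ℕ) (D : Finset (Finset (Fin n))) (hD : IsDownSet D) (h0 : ∅ ∈ D)
    (hUne : ((Finset.univ : Finset (Finset (Fin n))) \ D).Nonempty)
    (hle : sdepth ((Finset.univ : Finset (Finset (Fin n))) \ D) ≤ sdepth D)
    (X : Finset (Fin n)) (hX : MaxElt D X) (hXmax : ∀ B ∈ D, B.card ≤ X.card)
    (hXcard : sdepth D + 1 ≤ X.card) :
    sdepth D ≤ sdepth (D.erase X) ∧
      sdepth (insert X ((Finset.univ : Finset (Finset (Fin n))) \ D)) ≤ sdepth D :=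
  move_large_facet_general n D hD hUne hle X hX hXcard
end

section
/- Let 0 ≤ k ≤ n and let Q ⊆ 2^[n] be a family that admits an interval partition in which the maximal element of every interval has exactly k elements. For 0 ≤ i ≤ k let f_i = |{A ∈ Q : |A| = i}|. Then for every m with 0 ≤ m ≤ k, the alternating sum Σ_{i=0}^{m} (−1)^{m−i} · C(k−i, m−i) · f_i is nonnegative. (This is the necessity of the combinatorial criterion: the quantity equals the number of intervals of the partition whose minimal element has size m, since an interval with minimal element of size i contains exactly C(k−i, j−i) sets of size j.) -/
open Finset

/-!
An interval `[A, B]` with `|B| = k` contains `C(k - |A|, i - |A|)` sets of size `i`, so each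
`f_i` is a sum over the intervals of the partition. Since
`∑_{t ≤ d} (-1)^(d-t) C(K-t, d-t) C(K, t) = C(K, d) (1 - 1)^d`, binomial inversion turns the
alternating sum into the number of intervals whose minimal element has size `m`.
-/

theorem card_filter_Icc_card_eq {α : Type*} [DecidableEq α] {s t : Finset α} (hst : s ⊆ t)
    (i : ℕ) :
    #{u ∈ Icc s t | #u = i} = if #s ≤ i then (#t - #s).choose (i - #s) else 0 := by
  split_ifs with hi
  · rw [← card_sdiff_of_subset hst, ← card_powersetCard]
    refine card_nbij' (· \ s) (s ∪ ·) ?_ ?_ ?_ ?_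
    · intro u hu
      simp only [mem_coe, mem_filter, mem_Icc, mem_powersetCard] at hu ⊢
      exact ⟨sdiff_subset_sdiff hu.1.2 le_rfl, by rw [card_sdiff_of_subset hu.1.1, hu.2]⟩
    · intro v hv
      simp only [mem_coe, mem_filter, mem_Icc, mem_powersetCard, subset_sdiff] at hv ⊢
      refine ⟨⟨subset_union_left, union_subset hst hv.1.1⟩, ?_⟩
      rw [card_union_of_disjoint hv.1.2.symm, hv.2]
      omega
    · intro u hu
      simp only [mem_coe, mem_filter, mem_Icc] at hu
      exact union_sdiff_of_subset hu.1.1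
    · intro v hv
      simp only [mem_coe, mem_powersetCard, subset_sdiff] at hv
      exact union_sdiff_cancel_left hv.1.2.symm
  · refine card_eq_zero.2 (filter_eq_empty_iff.2 fun u hu hui => hi ?_)
    exact hui ▸ card_le_card (mem_Icc.1 hu).1

theorem alternating_sum_choose_mul_choose (K d : ℕ) :
    ∑ t ∈ range (d + 1), (-1 : ℤ) ^ (d - t) * (K - t).choose (d - t) * K.choose t = 0 ^ d := by
  have hchoose : ∀ t ∈ range (d + 1),
      (-1 : ℤ) ^ (d - t) * (K - t).choose (d - t) * K.choose t
        = K.choose d * (1 ^ t * (-1) ^ (d - t) * d.choose t) := by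
    intro t ht
    have h : (K.choose d * d.choose t : ℤ) = K.choose t * (K - t).choose (d - t) := by
      exact_mod_cast Nat.choose_mul (Nat.le_of_lt_succ (mem_range.1 ht))
    linear_combination -(-1 : ℤ) ^ (d - t) * h
  rw [sum_congr rfl hchoose, ← mul_sum, ← add_pow, add_neg_cancel]
  rcases d with _ | d <;> simp

theorem alternating_sum_choose_mul_ite_choose (k m j : ℕ) :
    ∑ i ∈ range (m + 1), (-1 : ℤ) ^ (m - i) * (k - i).choose (m - i) *
      (if j ≤ i then ((k - j).choose (i - j) : ℤ) else 0) = if j = m then 1 else 0 := by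
  rcases le_or_gt j m with hjm | hmj
  · obtain ⟨d, rfl⟩ := Nat.exists_eq_add_of_le hjm
    rw [add_assoc, sum_range_add, sum_eq_zero fun i hi => by simp [(mem_range.1 hi).not_ge]]
    simp [Nat.sub_add_eq, alternating_sum_choose_mul_choose, zero_pow_eq]
  · rw [if_neg hmj.ne', sum_eq_zero fun i hi => ?_]
    rw [if_neg (by have := mem_range.1 hi; omega), mul_zero]

namespace IntervalPartition

variable {n : ℕ} {Q : Finset (Finset (Fin n))} (P : IntervalPartition n Q)

theorem biUnion_Icc : P.pairs.biUnion (fun p => Icc p.1 p.2) = Q := by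
  ext A
  simp only [mem_biUnion]
  exact ⟨fun ⟨p, hp, hA⟩ => P.sub p hp hA, P.covers A⟩

theorem card_filter_eq_sum (r : Finset (Fin n) → Prop) [DecidablePred r] :
    #{A ∈ Q | r A} = ∑ p ∈ P.pairs, #{A ∈ Icc p.1 p.2 | r A} := by
  conv_lhs => rw [← P.biUnion_Icc]
  rw [filter_biUnion, card_biUnion]
  exact fun p hp q hq hpq => (P.disj p hp q hq hpq).mono (filter_subset _ _) (filter_subset _ _)

theorem card_filter_card_fst_eq_alternating_sum {k : ℕ} (hP : ∀ p ∈ P.pairs, #p.2 = k) (m : ℕ) :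
    (#{p ∈ P.pairs | #p.1 = m} : ℤ) = ∑ i ∈ range (m + 1),
      (-1 : ℤ) ^ (m - i) * (k - i).choose (m - i) * #{A ∈ Q | #A = i} := by
  symm
  calc _ = ∑ i ∈ range (m + 1), ∑ p ∈ P.pairs, (-1 : ℤ) ^ (m - i) * (k - i).choose (m - i) *
          (if #p.1 ≤ i then ((k - #p.1).choose (i - #p.1) : ℤ) else 0) := by
        refine sum_congr rfl fun i _ => ?_
        rw [P.card_filter_eq_sum, Nat.cast_sum, mul_sum]
        refine sum_congr rfl fun p hp => ?_
        rw [card_filter_Icc_card_eq (P.le p hp), hP p hp, Nat.cast_ite, Nat.cast_zero]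
    _ = ∑ p ∈ P.pairs, if #p.1 = m then 1 else 0 := by
        rw [sum_comm]
        exact sum_congr rfl fun p _ => alternating_sum_choose_mul_ite_choose k m #p.1
    _ = _ := by exact_mod_cast (card_filter _ _).symm

end IntervalPartition

theorem combinatorial_criterion_necessary_general
    (n k : ℕ) (Q : Finset (Finset (Fin n)))
    (P : IntervalPartition n Q) (hP : ∀ p ∈ P.pairs, p.2.card = k)
    (m : ℕ) :
    0 ≤ ∑ i ∈ Finset.range (m + 1),
      (-1 : ℤ) ^ (m - i) * (Nat.choose (k - i) (m - i) : ℤ) *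
        ((Q.filter (fun A => A.card = i)).card : ℤ) := by
  rw [← P.card_filter_card_fst_eq_alternating_sum hP m]
  exact Nat.cast_nonneg _

/-- Necessity of the combinatorial criterion: if `Q` admits an interval partition
in which every interval's maximal element has exactly `k` elements, then for
`0 ≤ m ≤ k` the alternating sum `Σ_{i=0}^m (-1)^(m-i) C(k-i, m-i) f_i` is
nonnegative, where `f_i` is the number of `i`-element members of `Q`. -/
theorem combinatorial_criterion_necessary
    (n k : ℕ) (hk : k ≤ n) (Q : Finset (Finset (Fin n)))
    (P : IntervalPartition n Q) (hP : ∀ p ∈ P.pairs, p.2.card = k)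
    (m : ℕ) (hm : m ≤ k) :
    0 ≤ ∑ i ∈ Finset.range (m + 1),
      (-1 : ℤ) ^ (m - i) * (Nat.choose (k - i) (m - i) : ℤ) *
        ((Q.filter (fun A => A.card = i)).card : ℤ) :=
  combinatorial_criterion_necessary_general n k Q P hP m
end

section
/- Let 0 ≤ k ≤ n and let Q ⊆ 2^[n] be a family that admits an interval partition in which the maximal element of every interval has exactly k elements. Then for every A ∈ Q and every m with 0 ≤ m ≤ k − |A|, the alternating sum Σ_{i=0}^{m} (−1)^{m−i} · C(k−|A|−i, m−i) · g_i is nonnegative, where g_i = |{B ∈ Q : A ⊆ B and |B| = |A| + i}|. (This is the necessity of the strong combinatorial criterion: restricting the partition to the closed up set of A inside Q again yields an interval partition with all maximal elements of size k.) -/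
open Finset

/-!
Restricted to the sets containing `A`, an interval `[C, D]` of the partition becomes the
interval `[C ∪ A, D]` (or nothing, if `A ⊄ D`), whose `i`-th level has
`C(k - |C ∪ A|, |A| + i - |C ∪ A|)` members. The alternating sum inverts exactly this binomial
transform, so each interval contributes `1` if `|C ∪ A| = |A| + m` and `0` otherwise: the sum
counts the intervals of the restricted partition whose minimal element has size `|A| + m`.
-/

theorem Int.alternating_sum_range_choose_sub_mul_choose (N s : ℕ) :
    ∑ t ∈ Finset.range (s + 1),
        (-1 : ℤ) ^ (s - t) * (((N - t).choose (s - t) * N.choose t : ℕ) : ℤ)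
      = if s = 0 then 1 else 0 := by
  have hterm : ∀ t ∈ Finset.range (s + 1),
      (-1 : ℤ) ^ (s - t) * (((N - t).choose (s - t) * N.choose t : ℕ) : ℤ)
        = N.choose s * ((-1) ^ (s - t) * s.choose t) := by
    intro t ht
    rw [mul_comm ((N - t).choose _), ← Nat.choose_mul (Nat.le_of_lt_succ (Finset.mem_range.1 ht))]
    push_cast
    ring
  have hreflect : ∑ t ∈ Finset.range (s + 1), (-1 : ℤ) ^ (s - t) * s.choose t
      = ∑ t ∈ Finset.range (s + 1), (-1 : ℤ) ^ t * s.choose t := by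
    rw [← sum_range_reflect]
    refine sum_congr rfl fun t ht => ?_
    have hts : t ≤ s := Nat.le_of_lt_succ (Finset.mem_range.1 ht)
    rw [Nat.add_sub_cancel, Nat.sub_sub_self hts, Nat.choose_symm hts]
  rw [sum_congr rfl hterm, ← mul_sum, hreflect, Int.alternating_sum_range_choose]
  split_ifs with hs <;> simp [hs]

theorem Finset.card_filter_Icc_card_eq_add {α : Type*} [DecidableEq α] {L D : Finset α}
    (hLD : L ⊆ D) (t : ℕ) :
    #{B ∈ Icc L D | B.card = L.card + t} = (D.card - L.card).choose t := by
  have hpowersetCard :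
      {U ∈ (D \ L).powerset | (L ∪ U).card = L.card + t} = (D \ L).powersetCard t := by
    ext U
    simp only [mem_filter, mem_powerset, mem_powersetCard, and_congr_right_iff]
    intro hU
    rw [card_union_of_disjoint (disjoint_sdiff.mono_right hU), Nat.add_left_cancel_iff]
  rw [Icc_eq_image_powerset hLD, filter_image, hpowersetCard,
    card_image_of_injOn, card_powersetCard, card_sdiff_of_subset hLD]
  have hcancel : ∀ W ∈ ((D \ L).powersetCard t : Set (Finset α)), (L ∪ W) \ L = W := by
    intro W hW
    rw [union_sdiff_left,
      sdiff_eq_self_of_disjoint (disjoint_sdiff.mono_right (mem_powersetCard.1 hW).1).symm]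
  intro U hU V hV (hUV : L ∪ U = L ∪ V)
  rw [← hcancel U hU, ← hcancel V hV, hUV]

theorem Finset.sum_alternating_card_filter_Icc {α : Type*} [DecidableEq α] {C D : Finset α}
    (hCD : C ⊆ D) (A : Finset α) (k m : ℕ) (hD : D.card = k) :
    ∑ i ∈ range (m + 1), (-1 : ℤ) ^ (m - i) * ((k - A.card - i).choose (m - i) : ℤ) *
        (#{B ∈ Icc C D | A ⊆ B ∧ B.card = A.card + i} : ℤ)
      = if A ⊆ D ∧ (C ∪ A).card = A.card + m then 1 else 0 := by
  by_cases hAD : A ⊆ D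
  swap
  · have hempty : ∀ i, {B ∈ Icc C D | A ⊆ B ∧ B.card = A.card + i} = ∅ := fun i =>
      filter_eq_empty_iff.2 fun B hB hAB => hAD (hAB.1.trans (mem_Icc.1 hB).2)
    simp [hempty, hAD]
  set L := C ∪ A
  obtain ⟨j, hj⟩ : ∃ j, L.card = A.card + j :=
    Nat.exists_eq_add_of_le (card_le_card subset_union_right)
  have hLD : L ⊆ D := union_subset hCD hAD
  have hfilter : ∀ i, {B ∈ Icc C D | A ⊆ B ∧ B.card = A.card + i}
      = {B ∈ Icc L D | B.card = A.card + i} := by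
    intro i
    ext B
    simp only [L, mem_filter, mem_Icc, union_subset_iff]
    tauto
  have hsmall : ∀ i < j, (#{B ∈ Icc L D | B.card = A.card + i} : ℤ) = 0 := fun i hi => by
    rw [Nat.cast_eq_zero, card_eq_zero, filter_eq_empty_iff]
    intro B hB hcard
    have := card_le_card (mem_Icc.1 hB).1
    omega
  simp only [hfilter, hAD, true_and, hj, Nat.add_left_cancel_iff]
  rcases lt_or_ge m j with hmj | hjm
  · rw [if_neg hmj.ne']
    exact sum_eq_zero fun i hi => by rw [hsmall i (by rw [mem_range] at hi; omega), mul_zero]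
  obtain ⟨s, rfl⟩ := Nat.exists_eq_add_of_le hjm
  rw [Nat.add_assoc j s 1, sum_range_add,
    sum_eq_zero fun i hi => by rw [hsmall i (mem_range.1 hi), mul_zero], zero_add]
  have hterm : ∀ t ∈ range (s + 1),
      (-1 : ℤ) ^ (j + s - (j + t)) * ((k - A.card - (j + t)).choose (j + s - (j + t)) : ℤ) *
        (#{B ∈ Icc L D | B.card = A.card + (j + t)} : ℤ)
      = (-1 : ℤ) ^ (s - t) *
          (((k - L.card - t).choose (s - t) * (k - L.card).choose t : ℕ) : ℤ) := by
    intro t _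
    have hsub : k - A.card - (j + t) = k - L.card - t := by omega
    rw [← add_assoc, ← hj, card_filter_Icc_card_eq_add hLD, hD, Nat.add_sub_add_left, hsub]
    push_cast
    ring
  rw [sum_congr rfl hterm, Int.alternating_sum_range_choose_sub_mul_choose]
  simp

theorem IntervalPartition.card_filter_eq_sum_s10 {n : ℕ} {Q : Finset (Finset (Fin n))}
    (P : IntervalPartition n Q) (p : Finset (Fin n) → Prop) [DecidablePred p] :
    #{B ∈ Q | p B} = ∑ I ∈ P.pairs, #{B ∈ Icc I.1 I.2 | p B} := by
  have hQ : {B ∈ Q | p B} = P.pairs.biUnion fun I => {B ∈ Icc I.1 I.2 | p B} := by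
    ext B
    simp only [mem_filter, mem_biUnion]
    exact ⟨fun ⟨hB, hpB⟩ => (P.covers B hB).imp fun I ⟨hI, hBI⟩ => ⟨hI, hBI, hpB⟩,
      fun ⟨I, hI, hBI, hpB⟩ => ⟨P.sub I hI hBI, hpB⟩⟩
  rw [hQ, card_biUnion]
  intro I hI J hJ hIJ
  exact (P.disj I hI J hJ hIJ).mono (filter_subset _ _) (filter_subset _ _)

theorem strong_combinatorial_criterion_necessary_general
    (n k : ℕ) (Q : Finset (Finset (Fin n)))
    (P : IntervalPartition n Q) (hP : ∀ p ∈ P.pairs, p.2.card = k)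
    (A : Finset (Fin n)) (m : ℕ) :
    0 ≤ ∑ i ∈ Finset.range (m + 1),
      (-1 : ℤ) ^ (m - i) * (Nat.choose (k - A.card - i) (m - i) : ℤ) *
        ((Q.filter (fun B => A ⊆ B ∧ B.card = A.card + i)).card : ℤ) := by
  have hcount : ∑ i ∈ range (m + 1),
      (-1 : ℤ) ^ (m - i) * ((k - A.card - i).choose (m - i) : ℤ) *
        (#{B ∈ Q | A ⊆ B ∧ B.card = A.card + i} : ℤ)
      = #{I ∈ P.pairs | A ⊆ I.2 ∧ (I.1 ∪ A).card = A.card + m} := by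
    simp only [P.card_filter_eq_sum_s10, Nat.cast_sum, mul_sum]
    rw [sum_comm, card_filter, Nat.cast_sum]
    refine sum_congr rfl fun I hI => ?_
    rw [sum_alternating_card_filter_Icc (P.le I hI) A k m (hP I hI)]
    norm_cast
  rw [hcount]
  positivity

/-- Necessity of the strong combinatorial criterion: if `Q` admits an interval
partition in which every interval's maximal element has exactly `k` elements, then
for every `A ∈ Q` and `0 ≤ m ≤ k - |A|`, the alternating sum
`Σ_{i=0}^m (-1)^(m-i) C(k-|A|-i, m-i) g_i` is nonnegative, where `g_i` is the
number of members `B` of `Q` with `A ⊆ B` and `|B| = |A| + i`. -/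
theorem strong_combinatorial_criterion_necessary
    (n k : ℕ) (hk : k ≤ n) (Q : Finset (Finset (Fin n)))
    (P : IntervalPartition n Q) (hP : ∀ p ∈ P.pairs, p.2.card = k)
    (A : Finset (Fin n)) (hA : A ∈ Q) (m : ℕ) (hm : m ≤ k - A.card) :
    0 ≤ ∑ i ∈ Finset.range (m + 1),
      (-1 : ℤ) ^ (m - i) * (Nat.choose (k - A.card - i) (m - i) : ℤ) *
        ((Q.filter (fun B => A ⊆ B ∧ B.card = A.card + i)).card : ℤ) :=
  strong_combinatorial_criterion_necessary_general n k Q P hP A m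
end

section
/- Let D ⊆ 2^[5] be the down set generated by the antichain {{1,2,3},{1,2,4},{1,2,5},{1,3,4},{3,4,5},{2,3,4}}, i.e., D consists of all subsets of these six 3-element sets. Then every interval partition of D contains an interval whose maximal element has fewer than 3 elements; equivalently, sdepth(D) < 3. (The obstruction is the up set of {5} inside D, namely {{5},{1,5},{2,5},{3,5},{4,5},{1,2,5},{3,4,5}}: the interval covering {5} consumes two 2-sets and one 3-set from it, and the remaining two 2-sets and one 3-set cannot be covered by a single interval avoiding {5}. This shows the combinatorial criterion is not sufficient for sdepth(D) = 3.) -/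
open Finset

/-!
Suppose every interval has a top of size at least 3. The only sets of `D` of that size
containing `4` are `{0,1,4}` and `{2,3,4}`; by symmetry say the interval through `{4}` has top `{0,1,4}`. The
intervals through `{2,4}` and `{3,4}` must then both have top `{2,3,4}`, so they coincide, and
their bottom lies in `{2,4} ∩ {3,4} = {4}`. Hence this interval also contains `{4}`, which
contradicts disjointness.
-/

namespace IntervalPartition

variable {n : ℕ} {Q : Finset (Finset (Fin n))} (P : IntervalPartition n Q)

theorem snd_mem_s11 {p : Finset (Fin n) × Finset (Fin n)} (hp : p ∈ P.pairs) : p.2 ∈ Q :=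
  P.sub p hp (mem_Icc.mpr ⟨P.le p hp, subset_rfl⟩)

theorem eq_of_mem_Icc {p q : Finset (Fin n) × Finset (Fin n)} (hp : p ∈ P.pairs)
    (hq : q ∈ P.pairs) {C : Finset (Fin n)} (hCp : C ∈ Icc p.1 p.2) (hCq : C ∈ Icc q.1 q.2) :
    p = q := by
  by_contra hpq
  exact disjoint_left.mp (P.disj p hp q hq hpq) hCp hCq

/-- Intervals through `B` and `C` with a common top coincide, so their bottom lies in
`B ∩ C ⊆ A`. -/
theorem eq_of_inter_subset {p q r : Finset (Fin n) × Finset (Fin n)} (hp : p ∈ P.pairs)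
    (hq : q ∈ P.pairs) (hr : r ∈ P.pairs) {A B C : Finset (Fin n)} (hA : A ∈ Icc p.1 p.2)
    (hB : B ∈ Icc q.1 q.2) (hC : C ∈ Icc r.1 r.2) (hqr : q.2 = r.2) (hBC : B ∩ C ⊆ A)
    (hAB : A ⊆ B) : p = q := by
  rw [mem_Icc] at hB hC
  have hrq : r = q :=
    P.eq_of_mem_Icc hr hq (mem_Icc.mpr ⟨P.le r hr, subset_rfl⟩)
      (mem_Icc.mpr ⟨P.le q hq |>.trans hqr.le, hqr.ge⟩)
  subst hrq
  exact P.eq_of_mem_Icc hp hq hA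
    (mem_Icc.mpr ⟨(subset_inter hB.1 hC.1).trans hBC, hAB.trans hB.2⟩)

end IntervalPartition

theorem sdepth_le_of_forall_exists_card_le {n k : ℕ} {Q : Finset (Finset (Fin n))}
    (h : ∀ P : IntervalPartition n Q, ∃ p ∈ P.pairs, p.2.card ≤ k) : sdepth Q ≤ k := by
  refine csSup_le' ?_
  rintro m ⟨P, hP⟩
  obtain ⟨p, hp, hpk⟩ := h P
  exact (hP p hp).trans hpk

def counterexampleDownSet : Finset (Finset (Fin 5)) :=
  univ.filter fun C => ∃ a ∈ ({{0,1,2}, {0,1,3}, {0,1,4}, {0,2,3}, {2,3,4}, {1,2,3}} :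
    Finset (Finset (Fin 5))), C ⊆ a

theorem eq_of_mem_counterexampleDownSet_of_four_mem :
    ∀ B ∈ counterexampleDownSet, 3 ≤ #B → 4 ∈ B → B = {0,1,4} ∨ B = {2,3,4} := by
  decide

theorem IntervalPartition.exists_card_lt_three (P : IntervalPartition 5 counterexampleDownSet) :
    ∃ p ∈ P.pairs, p.2.card < 3 := by
  by_contra! hbig
  have htop : ∀ q ∈ P.pairs, 4 ∈ q.2 → q.2 = {0,1,4} ∨ q.2 = {2,3,4} := fun q hq h4 =>
    eq_of_mem_counterexampleDownSet_of_four_mem _ (P.snd_mem_s11 hq) (hbig q hq) h4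
  have htop_of_mem : ∀ q ∈ P.pairs, ∀ C ∈ Icc q.1 q.2, 4 ∈ C →
      (¬C ⊆ {2,3,4} → q.2 = {0,1,4}) ∧ (¬C ⊆ {0,1,4} → q.2 = {2,3,4}) := by
    intro q hq C hC h4
    have hCq := (mem_Icc.mp hC).2
    rcases htop q hq (hCq h4) with h | h <;> rw [h] at hCq <;> tauto
  obtain ⟨p, hp, h4⟩ := P.covers {4} (by decide)
  rcases htop p hp ((mem_Icc.mp h4).2 (mem_singleton_self 4)) with hp2 | hp2
  · obtain ⟨q, hq, h24⟩ := P.covers {2,4} (by decide)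
    obtain ⟨r, hr, h34⟩ := P.covers {3,4} (by decide)
    have hq2 := (htop_of_mem q hq _ h24 (by decide)).2 (by decide)
    have hr2 := (htop_of_mem r hr _ h34 (by decide)).2 (by decide)
    have hpq := P.eq_of_inter_subset hp hq hr h4 h24 h34 (hq2.trans hr2.symm)
      (by decide) (by decide)
    rw [hpq, hq2] at hp2
    exact absurd hp2 (by decide)
  · obtain ⟨q, hq, h04⟩ := P.covers {0,4} (by decide)
    obtain ⟨r, hr, h14⟩ := P.covers {1,4} (by decide)
    have hq2 := (htop_of_mem q hq _ h04 (by decide)).1 (by decide)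
    have hr2 := (htop_of_mem r hr _ h14 (by decide)).1 (by decide)
    have hpq := P.eq_of_inter_subset hp hq hr h4 h04 h14 (hq2.trans hr2.symm)
      (by decide) (by decide)
    rw [hpq, hq2] at hp2
    exact absurd hp2 (by decide)

/-- The down set of `2^[5]` generated by the antichain
`{{1,2,3},{1,2,4},{1,2,5},{1,3,4},{3,4,5},{2,3,4}}` (here with `[5]` identified with
`Fin 5`, so `i ∈ [5]` corresponds to `i - 1 : Fin 5`) has Stanley depth less than 3:
every interval partition of it contains an interval whose maximal element has fewer
than 3 elements. -/
theorem example_criterion_not_sufficient :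
    ∀ D : Finset (Finset (Fin 5)),
      D = (Finset.univ : Finset (Finset (Fin 5))).filter
        (fun C => ∃ a ∈ ({{0,1,2}, {0,1,3}, {0,1,4}, {0,2,3}, {2,3,4}, {1,2,3}} :
          Finset (Finset (Fin 5))), C ⊆ a) →
      (∀ P : IntervalPartition 5 D, ∃ p ∈ P.pairs, p.2.card < 3) ∧ sdepth D < 3 := by
  rintro D rfl
  refine ⟨IntervalPartition.exists_card_lt_three, Nat.lt_succ_of_le ?_⟩
  refine sdepth_le_of_forall_exists_card_le fun P => ?_
  obtain ⟨p, hp, hp3⟩ := P.exists_card_lt_three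
  exact ⟨p, hp, Nat.le_of_lt_succ hp3⟩
end
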